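/- arXiv:2408.04753 — 4 statements merged into one kernel-verified Lean document; each statement's English description precedes it below -/
import Mathlib

section
/- Let n ≥ 2, let J ⊆ {1,…,n−1}, and let k ∈ J. Then the collection S_{J,k,□} := S_{k,□} ∪ {interval t-subsets of [n] : t ∈ J, t > k} ∪ {cointerval t-subsets of [n] : t ∈ J, t < k} is a weakly separated collection of J-subsets of [n], and it is the unique maximal weakly separated collection of J-sets containing S_{k,□}; indeed, every J-subset I of [n] with I ∉ S_{J,k,□} fails to be weakly separated from some member of S_{k,□}. In particular S_{J,k,□} is a maximal weakly separated collection of J-sets. -/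
/-- `allLt A B` means every element of `A` is smaller than every element of `B`
(vacuously true if `A` or `B` is empty). -/
def allLt (A B : Finset ℕ) : Prop := ∀ a ∈ A, ∀ b ∈ B, a < b

/-- Leclerc–Zelevinsky weak separation of two finite sets of integers. -/
def WeaklySeparated (I J : Finset ℕ) : Prop :=
  (J.card ≤ I.card ∧ ∃ J' J'' : Finset ℕ, Disjoint J' J'' ∧ J' ∪ J'' = J \ I ∧
      allLt J' (I \ J) ∧ allLt (I \ J) J'') ∨
  (I.card ≤ J.card ∧ ∃ I' I'' : Finset ℕ, Disjoint I' I'' ∧ I' ∪ I'' = I \ J ∧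
      allLt I' (J \ I) ∧ allLt (J \ I) I'')

/-- A collection of subsets is weakly separated if its members are pairwise weakly separated. -/
def WSColl (S : Set (Finset ℕ)) : Prop := ∀ I ∈ S, ∀ J ∈ S, WeaklySeparated I J

/-- An interval subset of `[n] = {1,…,n}`, i.e. one of the form `{a, a+1, …, b}`. -/
def IsIntervalSet (n : ℕ) (I : Finset ℕ) : Prop :=
  I ⊆ Finset.Icc 1 n ∧ ∃ a b : ℕ, I = Finset.Icc a b

/-- A cointerval subset of `[n]`: its complement in `[n]` is an interval. -/
def IsCointervalSet (n : ℕ) (I : Finset ℕ) : Prop :=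
  I ⊆ Finset.Icc 1 n ∧ ∃ a b : ℕ, Finset.Icc 1 n \ I = Finset.Icc a b

/-- The rectangle collection `S_{k,□}`: all interval `k`-subsets of `[n]` together with
all `k`-subsets of `[n]` that contain `1` and are a disjoint union of two intervals. -/
def Srect (n k : ℕ) : Set (Finset ℕ) :=
  {I | I ⊆ Finset.Icc 1 n ∧ I.card = k ∧
    ((∃ a b : ℕ, I = Finset.Icc a b) ∨
     (1 ∈ I ∧ ∃ A B : Finset ℕ, (∃ a b : ℕ, A = Finset.Icc a b) ∧
        (∃ c d : ℕ, B = Finset.Icc c d) ∧ Disjoint A B ∧ I = A ∪ B))}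

/-- The extended rectangle collection `S_{J,k,□}`: `S_{k,□}` together with all interval
`t`-subsets for `t ∈ J`, `t > k`, and all cointerval `t`-subsets for `t ∈ J`, `t < k`. -/
def SJrect (n : ℕ) (J : Finset ℕ) (k : ℕ) : Set (Finset ℕ) :=
  Srect n k ∪ {I | IsIntervalSet n I ∧ I.card ∈ J ∧ k < I.card}
    ∪ {I | IsCointervalSet n I ∧ I.card ∈ J ∧ I.card < k}

/-- A `J`-set: a subset of `[n]` whose cardinality belongs to `J`. -/
def IsJSet (n : ℕ) (J : Finset ℕ) (I : Finset ℕ) : Prop :=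
  I ⊆ Finset.Icc 1 n ∧ I.card ∈ J
open Finset

def Split (I L : Finset ℕ) : Prop :=
  ∀ ℓ ∈ L \ I, (∀ i ∈ I \ L, ℓ < i) ∨ (∀ i ∈ I \ L, i < ℓ)

lemma ws_symm {I L : Finset ℕ} (h : WeaklySeparated I L) : WeaklySeparated L I := h.symm

lemma split_aux {I L : Finset ℕ} (h : Split I L) :
    ∃ J' J'' : Finset ℕ, Disjoint J' J'' ∧ J' ∪ J'' = L \ I ∧
      allLt J' (I \ L) ∧ allLt (I \ L) J'' := by
  classical
  refine ⟨(L \ I).filter (fun ℓ => ∀ i ∈ I \ L, ℓ < i),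
    (L \ I).filter (fun ℓ => ¬ ∀ i ∈ I \ L, ℓ < i), ?_, ?_, ?_, ?_⟩
  · exact disjoint_filter_filter_not _ _ _
  · exact filter_union_filter_not_eq (p := fun ℓ => ∀ i ∈ I \ L, ℓ < i) _
  · intro a ha b hb
    exact (mem_filter.1 ha).2 b hb
  · intro a ha b hb
    rcases mem_filter.1 hb with ⟨hb1, hb2⟩
    rcases h b hb1 with h1 | h1
    · exact absurd h1 hb2
    · exact h1 a ha

lemma ws_iff (I L : Finset ℕ) : WeaklySeparated I L ↔
    (L.card ≤ I.card ∧ Split I L) ∨ (I.card ≤ L.card ∧ Split L I) := by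
  constructor
  · rintro (⟨hc, J', J'', _, hu, h1, h2⟩ | ⟨hc, I', I'', _, hu, h1, h2⟩)
    · refine Or.inl ⟨hc, fun ℓ hℓ => ?_⟩
      rw [← hu] at hℓ
      rcases mem_union.1 hℓ with h | h
      · exact Or.inl (fun i hi => h1 ℓ h i hi)
      · exact Or.inr (fun i hi => h2 i hi ℓ h)
    · refine Or.inr ⟨hc, fun ℓ hℓ => ?_⟩
      rw [← hu] at hℓ
      rcases mem_union.1 hℓ with h | h
      · exact Or.inl (fun i hi => h1 ℓ h i hi)
      · exact Or.inr (fun i hi => h2 i hi ℓ h)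
  · rintro (⟨hc, hs⟩ | ⟨hc, hs⟩)
    · exact Or.inl ⟨hc, split_aux hs⟩
    · exact Or.inr ⟨hc, split_aux hs⟩

lemma not_split {I L : Finset ℕ} {i1 ℓ i2 : ℕ} (h1 : i1 ∈ I \ L) (h2 : ℓ ∈ L \ I)
    (h3 : i2 ∈ I \ L) (h12 : i1 < ℓ) (h23 : ℓ < i2) : ¬ Split I L := by
  intro h
  rcases h ℓ h2 with h' | h'
  · exact absurd (h' i1 h1) (by omega)
  · exact absurd (h' i2 h3) (by omega)

lemma ws_interval {I : Finset ℕ} {a b : ℕ} (hc : I.card ≤ (Icc a b).card) :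
    WeaklySeparated I (Icc a b) := by
  rw [ws_iff]
  refine Or.inr ⟨hc, fun i hi => ?_⟩
  rcases mem_sdiff.1 hi with ⟨hiI, hinot⟩
  rw [mem_Icc] at hinot
  rcases (by omega : i < a ∨ b < i) with h | h
  · exact Or.inl (fun ℓ hℓ => by
      have := (mem_Icc.1 (mem_sdiff.1 hℓ).1).1; omega)
  · exact Or.inr (fun ℓ hℓ => by
      have := (mem_Icc.1 (mem_sdiff.1 hℓ).1).2; omega)

lemma ws_toInterval {I L : Finset ℕ} {n : ℕ} (hL : IsIntervalSet n L)
    (hc : I.card ≤ L.card) : WeaklySeparated I L := by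
  obtain ⟨-, a, b, rfl⟩ := hL
  exact ws_interval hc

lemma mySdiffSwap {n : ℕ} {I L : Finset ℕ} (hI : I ⊆ Icc 1 n) :
    (Icc 1 n \ L) \ (Icc 1 n \ I) = I \ L := by
  ext x
  simp only [mem_sdiff, not_and, not_not]
  constructor
  · rintro ⟨⟨hx1, hx2⟩, h⟩; exact ⟨h hx1, hx2⟩
  · rintro ⟨h1, h2⟩; exact ⟨⟨hI h1, h2⟩, fun _ => h1⟩

lemma ws_compl {n : ℕ} {I L : Finset ℕ} (hI : I ⊆ Icc 1 n) (hL : L ⊆ Icc 1 n)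
    (h : WeaklySeparated (Icc 1 n \ I) (Icc 1 n \ L)) : WeaklySeparated I L := by
  have e1 : (Icc 1 n \ L) \ (Icc 1 n \ I) = I \ L := mySdiffSwap hI
  have e2 : (Icc 1 n \ I) \ (Icc 1 n \ L) = L \ I := mySdiffSwap hL
  have c1 : (Icc 1 n \ I).card = (Icc 1 n).card - I.card := card_sdiff_of_subset hI
  have c2 : (Icc 1 n \ L).card = (Icc 1 n).card - L.card := card_sdiff_of_subset hL
  have cI : I.card ≤ (Icc 1 n).card := card_le_card hI
  have cL : L.card ≤ (Icc 1 n).card := card_le_card hL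
  rw [ws_iff] at h ⊢
  unfold Split at h ⊢
  rw [e1, e2, c1, c2] at h
  rcases h with ⟨hc, hs⟩ | ⟨hc, hs⟩
  · exact Or.inr ⟨by omega, hs⟩
  · exact Or.inl ⟨by omega, hs⟩

lemma ws_toCoint {n : ℕ} {I L : Finset ℕ} (hL : IsCointervalSet n L)
    (hI : I ⊆ Icc 1 n) (hc : L.card ≤ I.card) : WeaklySeparated I L := by
  obtain ⟨hLn, a, b, hab⟩ := hL
  refine ws_compl hI hLn ?_
  rw [hab]
  refine ws_interval ?_
  rw [← hab, card_sdiff_of_subset hI, card_sdiff_of_subset hLn]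
  have := card_le_card hLn
  omega
lemma mem_srect {n k a b c : ℕ} (hab : a < b)
    (hsub : Icc 1 a ∪ Icc b c ⊆ Icc 1 n)
    (hcard : (Icc 1 a ∪ Icc b c).card = k) : (Icc 1 a ∪ Icc b c) ∈ Srect n k := by
  refine ⟨hsub, hcard, ?_⟩
  rcases Nat.eq_zero_or_pos a with h | h
  · left
    subst h
    rw [Icc_eq_empty (by omega : ¬ (1:ℕ) ≤ 0), empty_union]
    exact ⟨b, c, rfl⟩
  · right
    refine ⟨mem_union_left _ (mem_Icc.2 ⟨le_refl 1, h⟩), Icc 1 a, Icc b c,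
      ⟨1, a, rfl⟩, ⟨b, c, rfl⟩, ?_, rfl⟩
    rw [Finset.disjoint_left]
    intro x hx hx'
    rw [mem_Icc] at hx hx'
    omega

lemma srect_normal {n k : ℕ} {I : Finset ℕ} (h : I ∈ Srect n k) :
    I ⊆ Icc 1 n ∧ I.card = k ∧ ∃ a b c : ℕ, I = Icc 1 a ∪ Icc b c := by
  obtain ⟨hsub, hcard, h⟩ := h
  refine ⟨hsub, hcard, ?_⟩
  rcases h with ⟨a, b, rfl⟩ | ⟨h1, A, B, ⟨a, b, rfl⟩, ⟨c, d, rfl⟩, hdisj, rfl⟩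
  · exact ⟨0, a, b, by rw [Icc_eq_empty (by omega : ¬ (1:ℕ) ≤ 0), empty_union]⟩
  · have h0 : ∀ x ∈ Icc a b ∪ Icc c d, 1 ≤ x := fun x hx => (mem_Icc.1 (hsub hx)).1
    rcases mem_union.1 h1 with h1 | h1
    · rw [mem_Icc] at h1
      have ha : a = 1 := by
        rcases Nat.eq_zero_or_pos a with h' | h'
        · exact absurd (h0 0 (mem_union_left _ (mem_Icc.2 (by omega)))) (by omega)
        · omega
      exact ⟨b, c, d, by rw [ha]⟩
    · rw [mem_Icc] at h1
      have hc : c = 1 := by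
        rcases Nat.eq_zero_or_pos c with h' | h'
        · exact absurd (h0 0 (mem_union_right _ (mem_Icc.2 (by omega)))) (by omega)
        · omega
      exact ⟨d, a, b, by rw [hc, union_comm]⟩

lemma srect_pair_aux {n : ℕ} {I L : Finset ℕ} {a b c a' b' c' : ℕ}
    (haa : a ≤ a') (hI : I = Icc 1 a ∪ Icc b c) (hL : L = Icc 1 a' ∪ Icc b' c')
    (hIn : I ⊆ Icc 1 n) (hLn : L ⊆ Icc 1 n) (hcard : I.card = L.card) :
    WeaklySeparated I L := by
  classical
  rw [ws_iff]
  by_cases hs : Split I L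
  · exact Or.inl ⟨hcard.ge, hs⟩
  · refine Or.inr ⟨hcard.le, ?_⟩
    unfold Split at hs
    push_neg at hs
    obtain ⟨ℓ, hℓ, ⟨i1, hi1, hle1⟩, ⟨i2, hi2, hle2⟩⟩ := hs
    obtain ⟨hℓL, hℓI⟩ := mem_sdiff.1 hℓ
    obtain ⟨hi1I, hi1L⟩ := mem_sdiff.1 hi1
    obtain ⟨hi2I, hi2L⟩ := mem_sdiff.1 hi2
    -- facts about i ∈ I \ L
    have key : ∀ i ∈ I \ L, a' < i ∧ b ≤ i ∧ i ≤ c := by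
      intro i hi
      obtain ⟨hiI, hiL⟩ := mem_sdiff.1 hi
      have h1 : 1 ≤ i := (mem_Icc.1 (hIn hiI)).1
      have h2 : ¬ (1 ≤ i ∧ i ≤ a') ∧ ¬ (b' ≤ i ∧ i ≤ c') := by
        constructor <;> intro h' <;>
          exact hiL (hL ▸ (by rw [mem_union, mem_Icc, mem_Icc]; tauto))
      have h3 : (1 ≤ i ∧ i ≤ a) ∨ (b ≤ i ∧ i ≤ c) := by
        have := hI ▸ hiI
        rw [mem_union, mem_Icc, mem_Icc] at this
        exact this
      omega
    obtain ⟨ha1, hb1, hc1⟩ := key i1 hi1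
    obtain ⟨ha2, hb2, hc2⟩ := key i2 hi2
    have hi1ℓ : i1 < ℓ := lt_of_le_of_ne hle1 (fun h => hℓI (h ▸ hi1I))
    have hℓi2 : ℓ < i2 := lt_of_le_of_ne hle2 (fun h => hℓI (h ▸ hi2I))
    have hℓb' : b' ≤ ℓ ∧ ℓ ≤ c' := by
      have := hL ▸ hℓL
      rw [mem_union, mem_Icc, mem_Icc] at this
      omega
    have hnb1 : ¬ (b' ≤ i1 ∧ i1 ≤ c') := by
      intro h'
      exact hi1L (hL ▸ (by rw [mem_union, mem_Icc, mem_Icc]; tauto))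
    have hnb2 : ¬ (b' ≤ i2 ∧ i2 ≤ c') := by
      intro h'
      exact hi2L (hL ▸ (by rw [mem_union, mem_Icc, mem_Icc]; tauto))
    have hi1b' : i1 < b' := by omega
    have hi2c' : c' < i2 := by omega
    have hsubI : Icc b' c' ⊆ I := by
      intro y hy
      rw [mem_Icc] at hy
      rw [hI, mem_union, mem_Icc, mem_Icc]
      omega
    -- now every element of L \ I is ≤ a' and every element of I \ L is > a'
    intro i hi
    refine Or.inr (fun ℓ' hℓ' => ?_)
    obtain ⟨hℓ'L, hℓ'I⟩ := mem_sdiff.1 hℓ'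
    have hℓ'a : ℓ' ≤ a' := by
      have := hL ▸ hℓ'L
      rw [mem_union, mem_Icc, mem_Icc] at this
      rcases this with h' | h'
      · omega
      · exact absurd (hsubI (mem_Icc.2 h')) hℓ'I
    have := (key i hi).1
    omega

lemma srect_pair {n k : ℕ} {I L : Finset ℕ} (hI : I ∈ Srect n k) (hL : L ∈ Srect n k) :
    WeaklySeparated I L := by
  obtain ⟨hIn, hIc, a, b, c, hIe⟩ := srect_normal hI
  obtain ⟨hLn, hLc, a', b', c', hLe⟩ := srect_normal hL
  rcases le_total a a' with h | h
  · exact srect_pair_aux h hIe hLe hIn hLn (by rw [hIc, hLc])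
  · exact ws_symm (srect_pair_aux h hLe hIe hLn hIn (by rw [hIc, hLc]))
lemma gap_lemma {n : ℕ} {K : Finset ℕ} (hK : K ⊆ Icc 1 n) (hne : K.Nonempty)
    (hni : ∀ a b : ℕ, K ≠ Icc a b) :
    ∃ x, x ∉ K ∧ x - 1 ∈ K ∧ 2 ≤ x ∧ ∃ v ∈ K, x < v := by
  classical
  set mn := K.min' hne with hmn
  set mx := K.max' hne with hmx
  have hmnK : mn ∈ K := K.min'_mem hne
  have hmxK : mx ∈ K := K.max'_mem hne
  have hKsub : K ⊆ Icc mn mx := fun y hy =>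
    mem_Icc.2 ⟨K.min'_le y hy, K.le_max' y hy⟩
  have hne2 : ((Icc mn mx).filter (fun y => y ∉ K)).Nonempty := by
    by_contra h
    rw [not_nonempty_iff_eq_empty, filter_eq_empty_iff] at h
    refine hni mn mx (Subset.antisymm hKsub (fun y hy => ?_))
    by_contra hyK
    exact (h hy) hyK
  set T := (Icc mn mx).filter (fun y => y ∉ K) with hT
  set x := T.min' hne2 with hx
  have hxT : x ∈ T := T.min'_mem hne2
  obtain ⟨hxIcc, hxK⟩ := mem_filter.1 hxT
  rw [mem_Icc] at hxIcc
  have hmnx : mn < x := lt_of_le_of_ne hxIcc.1 (fun h => hxK (h ▸ hmnK))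
  have hx1K : x - 1 ∈ K := by
    by_contra h
    have : x - 1 ∈ T := mem_filter.2 ⟨mem_Icc.2 ⟨by omega, by omega⟩, h⟩
    have := T.min'_le _ this
    omega
  have hmn1 : 1 ≤ mn := (mem_Icc.1 (hK hmnK)).1
  refine ⟨x, hxK, hx1K, by omega, mx, hmxK, ?_⟩
  exact lt_of_le_of_ne hxIcc.2 (fun h => hxK (h ▸ hmxK))

lemma core_lemma {n k x ℓ1 : ℕ} {I : Finset ℕ} (hI : I ⊆ Icc 1 n)
    (hcard : I.card = k)
    (hx : x ∉ I) (hx1 : x - 1 ∈ I)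
    (hℓ1I : ℓ1 ∉ I) (hℓ11 : 1 ≤ ℓ1)
    (hℓ1a : ℓ1 ≤ (I.filter (fun y => y < x)).card)
    (hi2 : ∃ i2 ∈ I, x < i2) :
    ∃ L ∈ Srect n k, ¬ WeaklySeparated I L := by
  classical
  obtain ⟨i2, hi2I, hi2x⟩ := hi2
  have hin : ∀ y ∈ I, 1 ≤ y ∧ y ≤ n := fun y hy => mem_Icc.1 (hI hy)
  have hx2 : 2 ≤ x := by have := (hin _ hx1).1; omega
  set a := (I.filter (fun y => y < x)).card with ha
  -- a ≤ x - 2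
  have ha2 : a + 2 ≤ x := by
    have hsub : I.filter (fun y => y < x) ⊆ (Icc 1 (x-1)).erase ℓ1 := by
      intro y hy
      obtain ⟨hyI, hyx⟩ := mem_filter.1 hy
      refine mem_erase.2 ⟨fun h => hℓ1I (h ▸ hyI), mem_Icc.2 ⟨(hin y hyI).1, by omega⟩⟩
    have hc := card_le_card hsub
    have hℓ1x : ℓ1 ≤ x - 1 := by
      have hsub' : I.filter (fun y => y < x) ⊆ Icc 1 (x-1) := by
        intro y hy
        obtain ⟨hyI, hyx⟩ := mem_filter.1 hy
        exact mem_Icc.2 ⟨(hin y hyI).1, by omega⟩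
      have := card_le_card hsub'
      rw [Nat.card_Icc] at this
      omega
    have hmem : ℓ1 ∈ Icc 1 (x-1) := mem_Icc.2 ⟨hℓ11, hℓ1x⟩
    rw [card_erase_of_mem hmem, Nat.card_Icc] at hc
    omega
  -- a + 1 ≤ k
  have hak : a + 1 ≤ k := by
    have hsub : I.filter (fun y => y < x) ⊆ I.erase i2 := by
      intro y hy
      obtain ⟨hyI, hyx⟩ := mem_filter.1 hy
      exact mem_erase.2 ⟨by omega, hyI⟩
    have := card_le_card hsub
    rw [card_erase_of_mem hi2I, hcard] at this
    have hk1 : 1 ≤ k := by rw [← hcard]; exact card_pos.2 ⟨i2, hi2I⟩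
    omega
  set c := x + (k - a) - 1 with hc
  have hxc : x ≤ c := by omega
  -- count of elements ≥ x
  have hcount : (I.filter (fun y => ¬ y < x)).card = k - a := by
    have := card_filter_add_card_filter_not (s := I) (p := fun y => y < x)
    omega
  have hcn : c + 1 ≤ n := by
    have hsub : I.filter (fun y => ¬ y < x) ⊆ Icc (x+1) n := by
      intro y hy
      obtain ⟨hyI, hyx⟩ := mem_filter.1 hy
      push_neg at hyx
      have hyx' : x + 1 ≤ y := by
        rcases lt_or_eq_of_le hyx with h | h
        · omega
        · exact absurd (h ▸ hyI) hx
      exact mem_Icc.2 ⟨hyx', (hin y hyI).2⟩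
    have := card_le_card hsub
    rw [hcount, Nat.card_Icc] at this
    have hxn : x ≤ n := by have := (hin _ hi2I).2; omega
    omega
  -- exists element of I above c
  have hi2' : ∃ i ∈ I, c < i := by
    by_contra h
    push_neg at h
    have hsub : I.filter (fun y => ¬ y < x) ⊆ Icc (x+1) c := by
      intro y hy
      obtain ⟨hyI, hyx⟩ := mem_filter.1 hy
      push_neg at hyx
      have hyx' : x + 1 ≤ y := by
        rcases lt_or_eq_of_le hyx with h' | h'
        · omega
        · exact absurd (h' ▸ hyI) hx
      exact mem_Icc.2 ⟨hyx', h y hyI⟩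
    have := card_le_card hsub
    rw [hcount, Nat.card_Icc] at this
    omega
  obtain ⟨i2', hi2'I, hi2'c⟩ := hi2'
  set L := Icc 1 a ∪ Icc x c with hL
  have hLsub : L ⊆ Icc 1 n := by
    intro y hy
    rcases mem_union.1 hy with h | h <;> rw [mem_Icc] at h <;> exact mem_Icc.2 (by omega)
  have hLcard : L.card = k := by
    rw [hL, card_union_of_disjoint, Nat.card_Icc, Nat.card_Icc]
    · omega
    · rw [Finset.disjoint_left]
      intro y hy hy'
      rw [mem_Icc] at hy hy'
      omega
  refine ⟨L, mem_srect (by omega) hLsub hLcard, ?_⟩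
  -- membership facts
  have hx1L : x - 1 ∈ I \ L := by
    refine mem_sdiff.2 ⟨hx1, fun h => ?_⟩
    rcases mem_union.1 h with h | h <;> rw [mem_Icc] at h <;> omega
  have hxL : x ∈ L \ I := by
    refine mem_sdiff.2 ⟨mem_union_right _ (mem_Icc.2 ⟨le_refl x, hxc⟩), hx⟩
  have hi2'L : i2' ∈ I \ L := by
    refine mem_sdiff.2 ⟨hi2'I, fun h => ?_⟩
    rcases mem_union.1 h with h | h <;> rw [mem_Icc] at h <;> omega
  have hℓ1L : ℓ1 ∈ L \ I := by
    refine mem_sdiff.2 ⟨mem_union_left _ (mem_Icc.2 ⟨hℓ11, hℓ1a⟩), hℓ1I⟩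
  rw [ws_iff]
  rintro (⟨_, hs⟩ | ⟨_, hs⟩)
  · exact not_split hx1L hxL hi2'L (by omega) (by omega) hs
  · exact not_split hℓ1L hx1L hxL (by omega) (by omega) hs
lemma big_lemma {n k t x : ℕ} {I : Finset ℕ} (hI : I ⊆ Icc 1 n)
    (hcard : I.card = t) (hkt : k < t) (hk1 : 1 ≤ k)
    (hx : x ∉ I) (hx1 : x - 1 ∈ I) (hi2 : ∃ i2 ∈ I, x < i2) :
    ∃ L ∈ Srect n k, ¬ WeaklySeparated I L := by
  classical
  obtain ⟨i2, hi2I, hi2x⟩ := hi2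
  have hin : ∀ y ∈ I, 1 ≤ y ∧ y ≤ n := fun y hy => mem_Icc.1 (hI hy)
  have hx2 : 2 ≤ x := by have := (hin _ hx1).1; omega
  set s := (I.filter (fun y => y < x)).card with hs
  have hs1 : 1 ≤ s := by
    refine card_pos.2 ⟨x - 1, mem_filter.2 ⟨hx1, by omega⟩⟩
  have hsx : s ≤ x - 1 := by
    have hsub : I.filter (fun y => y < x) ⊆ Icc 1 (x-1) := by
      intro y hy
      obtain ⟨hyI, hyx⟩ := mem_filter.1 hy
      exact mem_Icc.2 ⟨(hin y hyI).1, by omega⟩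
    have := card_le_card hsub
    rw [Nat.card_Icc] at this
    omega
  have hst : s + 1 ≤ t := by
    have hsub : I.filter (fun y => y < x) ⊆ I.erase i2 := by
      intro y hy
      obtain ⟨hyI, hyx⟩ := mem_filter.1 hy
      exact mem_erase.2 ⟨by omega, hyI⟩
    have := card_le_card hsub
    rw [card_erase_of_mem hi2I, hcard] at this
    omega
  set a := s + k - t with ha
  have hax : a + 2 ≤ x := by omega
  have hak : a + 1 ≤ k := by omega
  set c := x + (k - a) - 1 with hc
  have hxc : x ≤ c := by omega
  have hcount : (I.filter (fun y => ¬ y < x)).card = t - s := by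
    have := card_filter_add_card_filter_not (s := I) (p := fun y => y < x)
    omega
  have hcn : c + 1 ≤ n := by
    have hsub : I.filter (fun y => ¬ y < x) ⊆ Icc (x+1) n := by
      intro y hy
      obtain ⟨hyI, hyx⟩ := mem_filter.1 hy
      push_neg at hyx
      have hyx' : x + 1 ≤ y := by
        rcases lt_or_eq_of_le hyx with h | h
        · omega
        · exact absurd (h ▸ hyI) hx
      exact mem_Icc.2 ⟨hyx', (hin y hyI).2⟩
    have := card_le_card hsub
    rw [hcount, Nat.card_Icc] at this
    have hxn : x ≤ n := by have := (hin _ hi2I).2; omega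
    omega
  have hi2' : ∃ i ∈ I, c < i := by
    by_contra h
    push_neg at h
    have hsub : I.filter (fun y => ¬ y < x) ⊆ Icc (x+1) c := by
      intro y hy
      obtain ⟨hyI, hyx⟩ := mem_filter.1 hy
      push_neg at hyx
      have hyx' : x + 1 ≤ y := by
        rcases lt_or_eq_of_le hyx with h' | h'
        · omega
        · exact absurd (h' ▸ hyI) hx
      exact mem_Icc.2 ⟨hyx', h y hyI⟩
    have := card_le_card hsub
    rw [hcount, Nat.card_Icc] at this
    omega
  obtain ⟨i2', hi2'I, hi2'c⟩ := hi2'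
  set L := Icc 1 a ∪ Icc x c with hL
  have hLsub : L ⊆ Icc 1 n := by
    intro y hy
    rcases mem_union.1 hy with h | h <;> rw [mem_Icc] at h <;> exact mem_Icc.2 (by omega)
  have hLcard : L.card = k := by
    rw [hL, card_union_of_disjoint, Nat.card_Icc, Nat.card_Icc]
    · omega
    · rw [Finset.disjoint_left]
      intro y hy hy'
      rw [mem_Icc] at hy hy'
      omega
  refine ⟨L, mem_srect (by omega) hLsub hLcard, ?_⟩
  have hx1L : x - 1 ∈ I \ L := by
    refine mem_sdiff.2 ⟨hx1, fun h => ?_⟩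
    rcases mem_union.1 h with h | h <;> rw [mem_Icc] at h <;> omega
  have hxL : x ∈ L \ I := by
    exact mem_sdiff.2 ⟨mem_union_right _ (mem_Icc.2 ⟨le_refl x, hxc⟩), hx⟩
  have hi2'L : i2' ∈ I \ L := by
    refine mem_sdiff.2 ⟨hi2'I, fun h => ?_⟩
    rcases mem_union.1 h with h | h <;> rw [mem_Icc] at h <;> omega
  rw [ws_iff]
  rintro (⟨_, hsp⟩ | ⟨hcle, _⟩)
  · exact not_split hx1L hxL hi2'L (by omega) (by omega) hsp
  · rw [hcard, hLcard] at hcle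
    omega

lemma small_lemma {n k t x u v : ℕ} {I : Finset ℕ} (hI : I ⊆ Icc 1 n)
    (hcard : I.card = t) (htk : t < k) (hkn : k + 1 ≤ n)
    (hu : u ∉ I) (hu1 : 1 ≤ u) (hsub1 : Icc 1 (u-1) ⊆ I)
    (hux : u < x) (hxv : x < v) (hvn : v ≤ n) (hv : v ∉ I)
    (hsub2 : Icc x (v-1) ⊆ I) :
    ∃ L ∈ Srect n k, ¬ WeaklySeparated I L := by
  classical
  have hxI : x ∈ I := hsub2 (mem_Icc.2 ⟨le_refl x, by omega⟩)
  have hx1 : 1 ≤ x := (mem_Icc.1 (hI hxI)).1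
  -- counting fact F
  have hF : (u - 1) + (v - x) ≤ t := by
    have hsub : Icc 1 (u-1) ∪ Icc x (v-1) ⊆ I := union_subset hsub1 hsub2
    have hc := card_le_card hsub
    rw [card_union_of_disjoint, Nat.card_Icc, Nat.card_Icc, hcard] at hc
    · omega
    · rw [Finset.disjoint_left]
      intro y hy hy'
      rw [mem_Icc] at hy hy'
      omega
  set a := max u (x + k - n) with ha
  have hax : a + 1 ≤ x := by omega
  set c := x + k - a with hc
  have hcv : v ≤ c := by omega
  have hcn : c ≤ n := by omega
  have hak : a + 1 ≤ k := by omega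
  set L := Icc 1 a ∪ Icc (x+1) c with hL
  have hLsub : L ⊆ Icc 1 n := by
    intro y hy
    rcases mem_union.1 hy with h | h <;> rw [mem_Icc] at h <;> exact mem_Icc.2 (by omega)
  have hLcard : L.card = k := by
    rw [hL, card_union_of_disjoint, Nat.card_Icc, Nat.card_Icc]
    · omega
    · rw [Finset.disjoint_left]
      intro y hy hy'
      rw [mem_Icc] at hy hy'
      omega
  refine ⟨L, mem_srect (by omega) hLsub hLcard, ?_⟩
  have huL : u ∈ L \ I := by
    exact mem_sdiff.2 ⟨mem_union_left _ (mem_Icc.2 ⟨hu1, by omega⟩), hu⟩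
  have hxL : x ∈ I \ L := by
    refine mem_sdiff.2 ⟨hxI, fun h => ?_⟩
    rcases mem_union.1 h with h | h <;> rw [mem_Icc] at h <;> omega
  have hvL : v ∈ L \ I := by
    exact mem_sdiff.2 ⟨mem_union_right _ (mem_Icc.2 ⟨by omega, hcv⟩), hv⟩
  rw [ws_iff]
  rintro (⟨hcle, _⟩ | ⟨_, hsp⟩)
  · rw [hcard, hLcard] at hcle
    omega
  · exact not_split huL hxL hvL (by omega) (by omega) hsp
lemma rect_conflict {n k : ℕ} {I : Finset ℕ} (hI : I ⊆ Icc 1 n)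
    (hcard : I.card = k) (hk1 : 1 ≤ k) (hkn : k + 1 ≤ n)
    (hns : I ∉ Srect n k) : ∃ L ∈ Srect n k, ¬ WeaklySeparated I L := by
  classical
  have hnint : ∀ a b : ℕ, I ≠ Icc a b := fun a b h => hns ⟨hI, hcard, Or.inl ⟨a, b, h⟩⟩
  have hIne : I.Nonempty := card_pos.1 (by omega)
  by_cases h1 : 1 ∈ I
  · -- 1 ∈ I : double-gap extraction
    set K := Icc 1 n \ I with hK
    have hKne : K.Nonempty := by
      rw [← card_pos, hK, card_sdiff_of_subset hI, Nat.card_Icc]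
      omega
    set x1 := K.min' hKne with hx1
    have hx1K : x1 ∈ K := K.min'_mem hKne
    obtain ⟨hx1Icc, hx1I⟩ := mem_sdiff.1 hx1K
    rw [mem_Icc] at hx1Icc
    have hx12 : 2 ≤ x1 := by
      have : x1 ≠ 1 := fun h => hx1I (h ▸ h1)
      omega
    have hpre : ∀ y : ℕ, 1 ≤ y → y ≤ x1 - 1 → y ∈ I := by
      intro y h1y h2y
      by_contra hyI
      have : y ∈ K := mem_sdiff.2 ⟨mem_Icc.2 ⟨h1y, by omega⟩, hyI⟩
      have := K.min'_le y this
      omega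
    set Tb := I.filter (fun y => x1 < y) with hTb
    have hTbne : Tb.Nonempty := by
      by_contra h
      rw [not_nonempty_iff_eq_empty, filter_eq_empty_iff] at h
      refine hnint 1 (x1 - 1) (Finset.ext fun y => ⟨fun hy => ?_, fun hy => ?_⟩)
      · have h1y : 1 ≤ y := (mem_Icc.1 (hI hy)).1
        have := h hy
        have hne : y ≠ x1 := fun he => hx1I (he ▸ hy)
        exact mem_Icc.2 ⟨h1y, by omega⟩
      · rw [mem_Icc] at hy
        exact hpre y hy.1 hy.2
    set b := Tb.min' hTbne with hb
    have hbTb : b ∈ Tb := Tb.min'_mem hTbne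
    obtain ⟨hbI, hx1b⟩ := mem_filter.1 hbTb
    have hbn : b ≤ n := (mem_Icc.1 (hI hbI)).2
    have hmid : ∀ y ∈ I, y < x1 ∨ b ≤ y := by
      intro y hy
      rcases Nat.lt_or_ge y x1 with h | h
      · exact Or.inl h
      · have hne : y ≠ x1 := fun he => hx1I (he ▸ hy)
        exact Or.inr (Tb.min'_le y (mem_filter.2 ⟨hy, by omega⟩))
    set T2 := (Icc 1 n).filter (fun y => b < y ∧ y ∉ I) with hT2
    have hT2ne : T2.Nonempty := by
      by_contra h
      rw [not_nonempty_iff_eq_empty, filter_eq_empty_iff] at h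
      have hIeq : I = Icc 1 (x1 - 1) ∪ Icc b n := by
        refine Finset.ext fun y => ⟨fun hy => ?_, fun hy => ?_⟩
        · have hy1 : 1 ≤ y ∧ y ≤ n := mem_Icc.1 (hI hy)
          rcases hmid y hy with h' | h'
          · exact mem_union_left _ (mem_Icc.2 ⟨hy1.1, by omega⟩)
          · exact mem_union_right _ (mem_Icc.2 ⟨h', hy1.2⟩)
        · rcases mem_union.1 hy with h' | h' <;> rw [mem_Icc] at h'
          · exact hpre y h'.1 h'.2
          · rcases Nat.eq_or_lt_of_le h'.1 with he | hlt
            · exact he ▸ hbI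
            · by_contra hyI
              exact (h (mem_Icc.2 ⟨by omega, h'.2⟩)) ⟨hlt, hyI⟩
      refine hns ?_
      rw [hIeq]
      refine mem_srect (by omega) ?_ ?_
      · rw [← hIeq]; exact hI
      · rw [← hIeq]; exact hcard
    set x2 := T2.min' hT2ne with hx2def
    have hx2T2 : x2 ∈ T2 := T2.min'_mem hT2ne
    obtain ⟨hx2Icc, hbx2, hx2I⟩ := mem_filter.1 hx2T2
    rw [mem_Icc] at hx2Icc
    have hbetween : Icc b (x2 - 1) ⊆ I := by
      intro y hy
      rw [mem_Icc] at hy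
      rcases Nat.eq_or_lt_of_le hy.1 with he | hlt
      · exact he ▸ hbI
      · by_contra hyI
        have : y ∈ T2 := mem_filter.2 ⟨mem_Icc.2 ⟨by omega, by omega⟩, hlt, hyI⟩
        have := T2.min'_le y this
        omega
    have hx21I : x2 - 1 ∈ I := hbetween (mem_Icc.2 ⟨by omega, le_refl _⟩)
    have hi2 : ∃ i ∈ I, x2 < i := by
      by_contra h
      push_neg at h
      have hIeq : I = Icc 1 (x1 - 1) ∪ Icc b (x2 - 1) := by
        refine Finset.ext fun y => ⟨fun hy => ?_, fun hy => ?_⟩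
        · have hy1 : 1 ≤ y ∧ y ≤ n := mem_Icc.1 (hI hy)
          rcases hmid y hy with h' | h'
          · exact mem_union_left _ (mem_Icc.2 ⟨hy1.1, by omega⟩)
          · have hyx2 : y ≤ x2 := h y hy
            have hne : y ≠ x2 := fun he => hx2I (he ▸ hy)
            exact mem_union_right _ (mem_Icc.2 ⟨h', by omega⟩)
        · rcases mem_union.1 hy with h' | h' <;> rw [mem_Icc] at h'
          · exact hpre y h'.1 h'.2
          · exact hbetween (mem_Icc.2 h')
      refine hns ?_
      rw [hIeq]
      refine mem_srect (by omega) ?_ ?_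
      · rw [← hIeq]; exact hI
      · rw [← hIeq]; exact hcard
    have hfiltcard : x1 ≤ (I.filter (fun y => y < x2)).card := by
      have hsub : Icc 1 (x1 - 1) ∪ Icc b (x2 - 1) ⊆ I.filter (fun y => y < x2) := by
        intro y hy
        rcases mem_union.1 hy with h' | h' <;> rw [mem_Icc] at h'
        · exact mem_filter.2 ⟨hpre y h'.1 h'.2, by omega⟩
        · exact mem_filter.2 ⟨hbetween (mem_Icc.2 h'), by omega⟩
      have hc := card_le_card hsub
      rw [card_union_of_disjoint, Nat.card_Icc, Nat.card_Icc] at hc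
      · omega
      · rw [Finset.disjoint_left]
        intro y hy hy'
        rw [mem_Icc] at hy hy'
        omega
    exact core_lemma hI hcard hx2I hx21I hx1I (by omega) hfiltcard hi2
  · -- 1 ∉ I : single gap suffices
    obtain ⟨x, hxI, hx1I, hx2, v, hvI, hxv⟩ := gap_lemma hI hIne hnint
    have hfilt : 1 ≤ (I.filter (fun y => y < x)).card :=
      card_pos.2 ⟨x - 1, mem_filter.2 ⟨hx1I, by omega⟩⟩
    exact core_lemma hI hcard hxI hx1I h1 (le_refl 1) hfilt ⟨v, hvI, hxv⟩
lemma part3_main {n k : ℕ} {J : Finset ℕ} (hn : 2 ≤ n) (hJ : J ⊆ Icc 1 (n - 1))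
    (hk : k ∈ J) {I : Finset ℕ} (hIJ : IsJSet n J I) (hnot : I ∉ SJrect n J k) :
    ∃ L ∈ Srect n k, ¬ WeaklySeparated I L := by
  classical
  obtain ⟨hIn, htJ⟩ := hIJ
  have hkb : 1 ≤ k ∧ k ≤ n - 1 := mem_Icc.1 (hJ hk)
  have htb : 1 ≤ I.card ∧ I.card ≤ n - 1 := mem_Icc.1 (hJ htJ)
  rcases lt_trichotomy I.card k with htk | htk | htk
  · -- t < k : I is not a cointerval
    have hnc : ¬ IsCointervalSet n I := fun h =>
      hnot (Set.mem_union_right _ ⟨h, htJ, htk⟩)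
    set K := Icc 1 n \ I with hK
    have hni : ∀ a b : ℕ, K ≠ Icc a b := fun a b h => hnc ⟨hIn, a, b, h⟩
    have hKne : K.Nonempty := by
      by_contra h
      rw [not_nonempty_iff_eq_empty] at h
      exact hni 1 0 (by rw [h, Icc_eq_empty (by omega : ¬ (1:ℕ) ≤ 0)])
    obtain ⟨x, hxK, hx1K, hx2, v0, hv0K, hxv0⟩ :=
      gap_lemma (sdiff_subset) hKne hni
    obtain ⟨hx1Icc, hx1I⟩ := mem_sdiff.1 hx1K
    rw [mem_Icc] at hx1Icc
    have hv0n : v0 ≤ n := (mem_Icc.1 ((sdiff_subset : K ⊆ Icc 1 n) hv0K)).2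
    set u := K.min' hKne with hu
    have huK : u ∈ K := K.min'_mem hKne
    obtain ⟨huIcc, huI⟩ := mem_sdiff.1 huK
    rw [mem_Icc] at huIcc
    have hux : u < x := by
      have := K.min'_le _ hx1K
      omega
    have hsub1 : Icc 1 (u - 1) ⊆ I := by
      intro y hy
      rw [mem_Icc] at hy
      by_contra hyI
      have : y ∈ K := mem_sdiff.2 ⟨mem_Icc.2 ⟨hy.1, by omega⟩, hyI⟩
      have := K.min'_le y this
      omega
    have hvne : (K.filter (fun y => x < y)).Nonempty := ⟨v0, mem_filter.2 ⟨hv0K, hxv0⟩⟩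
    set v := (K.filter (fun y => x < y)).min' hvne with hv
    have hvmem : v ∈ K.filter (fun y => x < y) := min'_mem _ hvne
    obtain ⟨hvK, hxv⟩ := mem_filter.1 hvmem
    obtain ⟨hvIcc, hvI⟩ := mem_sdiff.1 hvK
    rw [mem_Icc] at hvIcc
    have hsub2 : Icc x (v - 1) ⊆ I := by
      intro y hy
      rw [mem_Icc] at hy
      by_contra hyI
      have hyK : y ∈ K := mem_sdiff.2 ⟨mem_Icc.2 ⟨by omega, by omega⟩, hyI⟩
      have hyx : x < y := by
        rcases Nat.eq_or_lt_of_le hy.1 with he | hlt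
        · exfalso; exact hxK (he ▸ hyK)
        · exact hlt
      have hvy : v ≤ y := min'_le _ y (mem_filter.2 ⟨hyK, hyx⟩)
      omega
    exact small_lemma hIn rfl htk (by omega) huI huIcc.1 hsub1 hux hxv hvIcc.2 hvI hsub2
  · -- t = k : not in Srect
    have hns : I ∉ Srect n k := fun h =>
      hnot (Set.mem_union_left _ (Set.mem_union_left _ h))
    exact rect_conflict hIn htk (by omega) (by omega) hns
  · -- t > k : I is not an interval
    have hni : ∀ a b : ℕ, I ≠ Icc a b := fun a b h =>
      hnot (Set.mem_union_left _ (Set.mem_union_right _ ⟨⟨hIn, a, b, h⟩, htJ, htk⟩))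
    have hIne : I.Nonempty := card_pos.1 (by omega)
    obtain ⟨x, hxI, hx1I, hx2, v, hvI, hxv⟩ := gap_lemma hIn hIne hni
    exact big_lemma hIn rfl htk (by omega) hxI hx1I ⟨v, hvI, hxv⟩

lemma classify {n k : ℕ} {J : Finset ℕ} {X : Finset ℕ} (hX : X ∈ SJrect n J k) :
    X ∈ Srect n k ∨ (IsIntervalSet n X ∧ k < X.card) ∨
      (IsCointervalSet n X ∧ X.card < k) := by
  rcases hX with (h | h) | h
  · exact Or.inl h
  · exact Or.inr (Or.inl ⟨h.1, h.2.2⟩)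
  · exact Or.inr (Or.inr ⟨h.1, h.2.2⟩)

lemma ws_coll_main {n k : ℕ} {J : Finset ℕ} : WSColl (SJrect n J k) := by
  intro X hX Y hY
  rcases classify hX with hX' | hX' | hX' <;> rcases classify hY with hY' | hY' | hY'
  · exact srect_pair hX' hY'
  · exact ws_toInterval hY'.1 (by have := hX'.2.1; omega)
  · exact ws_toCoint hY'.1 hX'.1 (by have := hX'.2.1; omega)
  · exact ws_symm (ws_toInterval hX'.1 (by have := hY'.2.1; omega))
  · rcases le_total X.card Y.card with h | h
    · exact ws_toInterval hY'.1 h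
    · exact ws_symm (ws_toInterval hX'.1 h)
  · exact ws_toCoint hY'.1 hX'.1.1 (by omega)
  · exact ws_symm (ws_toCoint hX'.1 hY'.1 (by have := hY'.2.1; omega))
  · exact ws_toInterval hY'.1 (by omega)
  · rcases le_total X.card Y.card with h | h
    · exact ws_symm (ws_toCoint hX'.1 hY'.1.1 h)
    · exact ws_toCoint hY'.1 hX'.1.1 h

/-- **Proposition (extended rectangle collections).**
Let `n ≥ 2`, `J ⊆ {1,…,n−1}` and `k ∈ J`.  Then `S_{J,k,□}` is a weakly separated
collection of `J`-subsets of `[n]`; every `J`-set not in `S_{J,k,□}` fails to be weakly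
separated from some member of `S_{k,□}`; consequently `S_{J,k,□}` is the unique maximal
weakly separated collection of `J`-sets containing `S_{k,□}`, and in particular it is a
maximal weakly separated collection of `J`-sets. -/
theorem extended_rectangle_collection_maximal_weakly_separated
    (n : ℕ) (hn : 2 ≤ n) (J : Finset ℕ) (hJ : J ⊆ Finset.Icc 1 (n - 1))
    (k : ℕ) (hk : k ∈ J) :
    (∀ I ∈ SJrect n J k, IsJSet n J I) ∧
    WSColl (SJrect n J k) ∧
    (∀ I : Finset ℕ, IsJSet n J I → I ∉ SJrect n J k →
      ∃ L ∈ Srect n k, ¬ WeaklySeparated I L) ∧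
    (∀ S : Set (Finset ℕ), (∀ I ∈ S, IsJSet n J I) → WSColl S →
      Srect n k ⊆ S → S ⊆ SJrect n J k) ∧
    (∀ I : Finset ℕ, IsJSet n J I →
      (∀ L ∈ SJrect n J k, WeaklySeparated I L) → I ∈ SJrect n J k) := by
  have h3 : ∀ I : Finset ℕ, IsJSet n J I → I ∉ SJrect n J k →
      ∃ L ∈ Srect n k, ¬ WeaklySeparated I L :=
    fun I hIJ hnot => part3_main hn hJ hk hIJ hnot
  have hsr : Srect n k ⊆ SJrect n J k :=
    fun I h => Set.mem_union_left _ (Set.mem_union_left _ h)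
  refine ⟨?_, ws_coll_main, h3, ?_, ?_⟩
  · intro I hI
    rcases hI with (h | h) | h
    · exact ⟨h.1, h.2.1.symm ▸ hk⟩
    · exact ⟨h.1.1, h.2.1⟩
    · exact ⟨h.1.1, h.2.1⟩
  · intro S hJsets hWS hsub I hIS
    by_contra hnot
    obtain ⟨L, hL, hnws⟩ := h3 I (hJsets I hIS) hnot
    exact hnws (hWS I hIS L (hsub hL))
  · intro I hIJ hall
    by_contra hnot
    obtain ⟨L, hL, hnws⟩ := h3 I hIJ hnot
    exact hnws (hall L (hsr hL))
end

section
/- Let n ≥ 2, let J = [r, s] ⊆ {1,…,n−1} be an interval, and let k ∈ J with k−1 ∈ J. Then the collections S_{J,k,□} and S_{J,k−1,□} are flip equivalent: S_{J,k−1,□} is obtained from S_{J,k,□} by a finite sequence of weak lowering flips, each intermediate collection being weakly separated. Consequently, all the collections S_{J,l,□} with l ∈ J are pairwise flip equivalent. -/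
/-- A weak raising flip: for `L ⊆ [n]` and `i < j < k` in `[n] \ L`, if `S` contains `Lj`
and its witnesses `Li`, `Lk`, `Lij`, `Ljk`, replace `Lj` by `Lik`. -/
def RaisingFlip (n : ℕ) (S S' : Set (Finset ℕ)) : Prop :=
  ∃ (L : Finset ℕ) (i j k : ℕ), L ⊆ Finset.Icc 1 n ∧
    i ∈ Finset.Icc 1 n ∧ j ∈ Finset.Icc 1 n ∧ k ∈ Finset.Icc 1 n ∧
    i ∉ L ∧ j ∉ L ∧ k ∉ L ∧ i < j ∧ j < k ∧
    L ∪ {j} ∈ S ∧ L ∪ {i} ∈ S ∧ L ∪ {k} ∈ S ∧ L ∪ {i, j} ∈ S ∧ L ∪ {j, k} ∈ S ∧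
    S' = (S \ {L ∪ {j}}) ∪ {L ∪ {i, k}}

/-- A weak lowering flip: the inverse operation, replacing `Lik` by `Lj` when
`Li`, `Lk`, `Lij`, `Ljk` are present. -/
def LoweringFlip (n : ℕ) (S S' : Set (Finset ℕ)) : Prop :=
  ∃ (L : Finset ℕ) (i j k : ℕ), L ⊆ Finset.Icc 1 n ∧
    i ∈ Finset.Icc 1 n ∧ j ∈ Finset.Icc 1 n ∧ k ∈ Finset.Icc 1 n ∧
    i ∉ L ∧ j ∉ L ∧ k ∉ L ∧ i < j ∧ j < k ∧
    L ∪ {i, k} ∈ S ∧ L ∪ {i} ∈ S ∧ L ∪ {k} ∈ S ∧ L ∪ {i, j} ∈ S ∧ L ∪ {j, k} ∈ S ∧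
    S' = (S \ {L ∪ {i, k}}) ∪ {L ∪ {j}}

/-- Two collections are flip equivalent if one can be obtained from the other by a finite
sequence of weak raising and lowering flips through weakly separated collections. -/
def FlipEquiv (n : ℕ) (S S' : Set (Finset ℕ)) : Prop :=
  ∃ (m : ℕ) (C : ℕ → Set (Finset ℕ)), C 0 = S ∧ C m = S' ∧
    (∀ t < m, RaisingFlip n (C t) (C (t + 1)) ∨ LoweringFlip n (C t) (C (t + 1))) ∧
    (∀ t ≤ m, WSColl (C t))


open Finset Relation

theorem Relation.ReflTransGen.exists_seq {α : Type*} {R : α → α → Prop} {P : α → Prop}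
    {a b : α} (h : ReflTransGen (fun x y => R x y ∧ P y) a b) (ha : P a) :
    ∃ (m : ℕ) (C : ℕ → α), C 0 = a ∧ C m = b ∧ (∀ t < m, R (C t) (C (t + 1))) ∧
      ∀ t ≤ m, P (C t) := by
  induction h with
  | refl => exact ⟨0, fun _ => a, rfl, rfl, by simp, fun _ _ => ha⟩
  | @tail b c _ hbc ih =>
    obtain ⟨m, C, h0, hm, hR, hP⟩ := ih
    refine ⟨m + 1, fun t => if t ≤ m then C t else c, by simpa using h0, by simp, ?_, ?_⟩
    · intro t ht
      rcases Nat.lt_or_ge t m with htm | htm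
      · simpa [htm.le, Nat.succ_le_of_lt htm] using hR t htm
      · obtain rfl : t = m := by omega
        simpa [hm] using hbc.1
    · intro t ht
      by_cases htm : t ≤ m
      · simpa [htm] using hP t htm
      · simpa [htm] using hbc.2

section WeakSeparation

variable {I J : Finset ℕ}

theorem WeaklySeparated.symm (h : WeaklySeparated I J) : WeaklySeparated J I :=
  Or.symm h

theorem weaklySeparated_of_sdiff_subset_Icc {e f : ℕ} (hcard : J.card ≤ I.card)
    (hIJ : I \ J ⊆ Icc e f) (hJI : Disjoint (J \ I) (Icc e f)) : WeaklySeparated I J := by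
  refine Or.inl ⟨hcard, (J \ I).filter (· < e), (J \ I).filter (¬ · < e),
    disjoint_filter_filter_not _ _ _, filter_union_filter_not_eq _ _, ?_, ?_⟩
  · intro a ha b hb
    exact (mem_filter.1 ha).2.trans_le (mem_Icc.1 (hIJ hb)).1
  · intro a ha b hb
    obtain ⟨hbJI, hbe⟩ := mem_filter.1 hb
    have hb' : b ∉ Icc e f := disjoint_left.1 hJI hbJI
    rw [mem_Icc] at hb'
    exact (mem_Icc.1 (hIJ ha)).2.trans_lt (by omega)

theorem weaklySeparated_Icc_left {a b : ℕ} (hcard : J.card ≤ (Icc a b).card) :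
    WeaklySeparated (Icc a b) J :=
  weaklySeparated_of_sdiff_subset_Icc hcard sdiff_subset
    (disjoint_left.2 fun _ hx hx' => (mem_sdiff.1 hx).2 hx')

theorem weaklySeparated_of_compl_eq_Icc {n e f : ℕ} (hI : I ⊆ Icc 1 n)
    (hJ : Icc 1 n \ J = Icc e f) (hcard : J.card ≤ I.card) : WeaklySeparated I J := by
  refine weaklySeparated_of_sdiff_subset_Icc (e := e) (f := f) hcard (fun x hx => ?_)
    (disjoint_left.2 fun x hx hx' => ?_)
  · rw [← hJ]
    exact mem_sdiff.2 ⟨hI (mem_sdiff.1 hx).1, (mem_sdiff.1 hx).2⟩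
  · rw [← hJ] at hx'
    exact (mem_sdiff.1 hx').2 (mem_sdiff.1 hx).1

theorem weaklySeparated_prefix_union_Icc {p a b : ℕ} (hJ : Icc 1 p ⊆ J)
    (hcard : J.card ≤ (Icc 1 p ∪ Icc a b).card) :
    WeaklySeparated (Icc 1 p ∪ Icc a b) J := by
  refine weaklySeparated_of_sdiff_subset_Icc hcard (fun x hx => ?_)
    (disjoint_left.2 fun x hx hx' => (mem_sdiff.1 hx).2 (mem_union_right _ hx'))
  obtain ⟨hxI, hxJ⟩ := mem_sdiff.1 hx
  exact (mem_union.1 hxI).resolve_left fun h => hxJ (hJ h)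

theorem not_weaklySeparated_flip {L : Finset ℕ} {i j k : ℕ} (hi : i ∉ L) (hj : j ∉ L)
    (hk : k ∉ L) (hij : i < j) (hjk : j < k) : ¬ WeaklySeparated (L ∪ {i, k}) (L ∪ {j}) := by
  have hj_mem : j ∈ (L ∪ {j}) \ (L ∪ {i, k}) := by simp [hj]; omega
  have hi_mem : i ∈ (L ∪ {i, k}) \ (L ∪ {j}) := by simp [hi]; omega
  have hk_mem : k ∈ (L ∪ {i, k}) \ (L ∪ {j}) := by simp [hk]; omega
  rintro (⟨-, J', J'', -, hU, hlt, hgt⟩ | ⟨hcard, -⟩)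
  · rcases mem_union.1 (hU ▸ hj_mem) with h | h
    · exact absurd (hlt j h i hi_mem) (by omega)
    · exact absurd (hgt k hk_mem j h) (by omega)
  · rw [card_union_of_disjoint (by simp [hi, hk]), card_union_of_disjoint (by simp [hj]),
      card_pair (hij.trans hjk).ne] at hcard
    simp at hcard

end WeakSeparation

theorem raisingFlip_of_loweringFlip {n : ℕ} {S S' : Set (Finset ℕ)} (h : LoweringFlip n S S')
    (hS : WSColl S) : RaisingFlip n S' S := by
  obtain ⟨L, i, j, k, hL, hi, hj, hk, hiL, hjL, hkL, hij, hjk, hik, h1, h2, h3, h4, rfl⟩ := h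
  have hjS : L ∪ {j} ∉ S := fun hj' =>
    not_weaklySeparated_flip hiL hjL hkL hij hjk (hS _ hik _ hj')
  have hkeep : ∀ X ∈ S, (i ∉ X ∨ j ∈ X ∨ k ∉ X) → X ∈ S \ {L ∪ {i, k}} := fun X hX hX' =>
    ⟨hX, fun he => by
      rw [Set.mem_singleton_iff] at he
      simp [he, hjL] at hX'
      omega⟩
  refine ⟨L, i, j, k, hL, hi, hj, hk, hiL, hjL, hkL, hij, hjk, Or.inr rfl,
    Or.inl (hkeep _ h1 ?_), Or.inl (hkeep _ h2 ?_), Or.inl (hkeep _ h3 ?_), Or.inl (hkeep _ h4 ?_), ?_⟩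
  · simp [hkL]; omega
  · simp [hiL]; omega
  · simp
  · simp
  ext X
  simp only [Set.mem_union, Set.mem_sdiff, Set.mem_singleton_iff]
  grind

section Rectangles

/-- `rect k (p, c) = [1, p] ∪ [p + c + 1, c + k]`: a prefix of length `p` and, after a gap of
length `c`, a block of length `k - p`. These are the members of `S_{k,□}`, and flipping the cell
`x` replaces `rect k x` by `lowerRect k x`. -/
def rect (k : ℕ) (x : ℕ × ℕ) : Finset ℕ :=
  Icc 1 x.1 ∪ Icc (x.1 + x.2 + 1) (x.2 + k)

def lowerRect (k : ℕ) (x : ℕ × ℕ) : Finset ℕ :=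
  rect (k - 1) (x.1 - 1, x.2)

variable {n k a : ℕ} {x y : ℕ × ℕ}

theorem mem_rect : a ∈ rect k x ↔ 1 ≤ a ∧ a ≤ x.1 ∨ x.1 + x.2 + 1 ≤ a ∧ a ≤ x.2 + k := by
  simp [rect]

theorem mem_lowerRect :
    a ∈ lowerRect k x ↔ 1 ≤ a ∧ a ≤ x.1 - 1 ∨ x.1 - 1 + x.2 + 1 ≤ a ∧ a ≤ x.2 + (k - 1) :=
  mem_rect

theorem card_rect (hx : x.1 ≤ k) : (rect k x).card = k := by
  rw [rect, card_union_of_disjoint, Nat.card_Icc, Nat.card_Icc]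
  · omega
  · exact disjoint_left.2 fun a ha ha' => by simp only [mem_Icc] at ha ha'; omega

theorem card_lowerRect (hx : x.1 ≤ k) : (lowerRect k x).card = k - 1 :=
  card_rect (by dsimp; omega)

theorem rect_subset_Icc (hx : x.1 ≤ k) (hxn : x.2 + k ≤ n) : rect k x ⊆ Icc 1 n := by
  intro a ha
  rw [mem_rect] at ha
  rw [mem_Icc]
  omega

theorem rect_eq_Icc_one (hx : x.1 = k ∨ x.2 = 0) (hxk : x.1 ≤ k) : rect k x = Icc 1 k := by
  ext a
  rw [mem_rect, mem_Icc]
  omega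

theorem eq_of_rect_eq (hx : x ∈ Set.Icc 1 (k - 1, n - k)) (hy : y.1 < k)
    (h : rect k y = rect k x) : y = x := by
  simp only [Set.mem_Icc, Prod.le_def, Prod.fst_one, Prod.snd_one] at hx
  have h' := fun a => (Finset.ext_iff.1 h a)
  have := h' 1; have := h' x.1; have := h' (x.1 + 1); have := h' (x.1 + x.2 + 1)
  have := h' y.1; have := h' (y.1 + 1); have := h' (y.1 + y.2 + 1); have := h' (x.2 + k)
  simp only [mem_rect] at *
  ext <;> omega

def flipBase (k : ℕ) (x : ℕ × ℕ) : Finset ℕ :=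
  Icc 1 (x.1 - 1) ∪ Icc (x.1 + x.2 + 1) (x.2 + k - 1)

theorem flipBase_union {p c : ℕ} (hp : 1 ≤ p) (hc : 1 ≤ c) (hpk : p < k) :
    flipBase k (p, c) ∪ {p, c + k} = rect k (p, c) ∧
      flipBase k (p, c) ∪ {p + c} = lowerRect k (p, c) ∧
      flipBase k (p, c) ∪ {p} = lowerRect k (p + 1, c) ∧
      flipBase k (p, c) ∪ {c + k} = lowerRect k (p, c + 1) ∧
      flipBase k (p, c) ∪ {p, p + c} = rect k (p, c - 1) ∧
      flipBase k (p, c) ∪ {p + c, c + k} = rect k (p - 1, c) := by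
  refine ⟨?_, ?_, ?_, ?_, ?_, ?_⟩ <;> ext a <;>
    simp only [flipBase, mem_union, mem_Icc, mem_insert, mem_singleton, mem_rect,
      mem_lowerRect] <;> omega

theorem weaklySeparated_rect_of_prefix_subset {I : Finset ℕ} (hx : x.1 ≤ k)
    (hI : Icc 1 x.1 ⊆ I) (hcard : I.card ≤ k) : WeaklySeparated (rect k x) I :=
  weaklySeparated_prefix_union_Icc hI (by rw [← rect, card_rect hx]; exact hcard)

/-- Used for an unflipped cell `x` and a flipped cell `y ≰ x`: all of `rect k x \ lowerRect k y`
lies below `lowerRect k y \ rect k x`. -/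
theorem weaklySeparated_rect_lowerRect (hx : x.1 < k) (hy : 1 ≤ y.1) (h1 : y.1 ≤ x.1)
    (h2 : x.2 < y.2) : WeaklySeparated (rect k x) (lowerRect k y) := by
  refine weaklySeparated_of_sdiff_subset_Icc (e := 0) (f := y.1 + y.2 - 1)
    (by rw [card_rect hx.le, card_lowerRect (by omega)]; omega) (fun a ha => ?_)
    (disjoint_left.2 fun a ha ha' => ?_)
  · simp only [mem_sdiff, mem_rect, mem_lowerRect] at ha
    rw [mem_Icc]
    omega
  · simp only [mem_sdiff, mem_rect, mem_lowerRect] at ha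
    rw [mem_Icc] at ha'
    omega

theorem mem_image_rect_of_Icc_union {b c d : ℕ}
    (hsub : Icc 1 b ∪ Icc c d ⊆ Icc 1 n) (hcard : (Icc 1 b ∪ Icc c d).card = k)
    (hdisj : Disjoint (Icc 1 b) (Icc c d)) :
    Icc 1 b ∪ Icc c d ∈ rect k '' Set.Iic (k - 1, n - k) := by
  rcases le_or_gt c d with hcd | hcd
  · have hc : c ∈ Icc 1 n := hsub (mem_union_right _ (mem_Icc.2 ⟨le_rfl, hcd⟩))
    have hd : d ∈ Icc 1 n := hsub (mem_union_right _ (mem_Icc.2 ⟨hcd, le_rfl⟩))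
    rw [mem_Icc] at hc hd
    have hbc : b < c := by
      by_contra h
      exact disjoint_left.1 hdisj (mem_Icc.2 ⟨hc.1, by omega⟩) (mem_Icc.2 ⟨le_rfl, hcd⟩)
    rw [card_union_of_disjoint hdisj, Nat.card_Icc, Nat.card_Icc] at hcard
    refine ⟨(b, c - b - 1), by simp only [Set.mem_Iic, Prod.le_def]; omega, ?_⟩
    ext a
    simp only [mem_rect, mem_union, mem_Icc]
    omega
  · rw [Icc_eq_empty_of_lt hcd, union_empty] at hcard ⊢
    rw [Nat.card_Icc, Nat.add_sub_cancel] at hcard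
    exact ⟨(k - 1, 0), by simp only [Set.mem_Iic, Prod.le_def]; omega,
      hcard ▸ rect_eq_Icc_one (Or.inr rfl) (by dsimp; omega)⟩

theorem image_rect_Iic (hkn : k ≤ n) :
    rect k '' Set.Iic (k - 1, n - k) = Srect n k := by
  ext X
  constructor
  · rintro ⟨x, hx, rfl⟩
    simp only [Set.mem_Iic, Prod.le_def] at hx
    refine ⟨rect_subset_Icc (by omega) (by omega), card_rect (by omega), ?_⟩
    rcases Nat.eq_zero_or_pos x.1 with hx1 | hx1
    · exact Or.inl ⟨x.2 + 1, x.2 + k, by ext a; rw [mem_rect, mem_Icc]; omega⟩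
    · refine Or.inr ⟨by rw [mem_rect]; omega, _, _, ⟨_, _, rfl⟩, ⟨_, _, rfl⟩,
        disjoint_left.2 fun a ha ha' => ?_, rfl⟩
      rw [mem_Icc] at ha ha'
      omega
  · rintro ⟨hsub, hcard, ⟨a, b, rfl⟩ | ⟨h1, A, B, ⟨a, b, rfl⟩, ⟨c, d, rfl⟩, hdisj, rfl⟩⟩
    · rw [← empty_union (Icc a b), ← Icc_eq_empty_of_lt zero_lt_one] at hsub hcard ⊢
      exact mem_image_rect_of_Icc_union hsub hcard (disjoint_empty_left _)
    · wlog h1A : 1 ∈ Icc a b generalizing a b c d with H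
      · rw [union_comm] at hsub hcard h1 ⊢
        exact H c d a b (hdisj := hdisj.symm) (hsub := hsub) (hcard := hcard) (h1 := h1)
          ((mem_union.1 h1).resolve_right h1A)
      rw [mem_Icc] at h1A
      obtain rfl : a = 1 := by
        have := mem_Icc.1 (hsub (mem_union_left _ (mem_Icc.2 ⟨le_rfl, by omega⟩)))
        omega
      exact mem_image_rect_of_Icc_union hsub hcard hdisj

theorem image_lowerRect_Icc (hk : 2 ≤ k) (hkn : k ≤ n) :
    lowerRect k '' Set.Icc 1 (k, n - k + 1) = Srect n (k - 1) := by
  rw [← image_rect_Iic (by omega)]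
  ext X
  simp only [Set.mem_image, Set.mem_Icc, Set.mem_Iic, Prod.le_def, Prod.fst_one, Prod.snd_one]
  constructor
  · rintro ⟨x, hx, rfl⟩
    rcases lt_or_eq_of_le hx.2.1 with hxk | hxk
    · exact ⟨(x.1 - 1, x.2), by dsimp; omega, rfl⟩
    · refine ⟨(k - 2, 0), by dsimp; omega, ?_⟩
      rw [lowerRect, rect_eq_Icc_one (x := (k - 2, 0)) (Or.inr rfl) (by dsimp; omega),
        rect_eq_Icc_one (Or.inl (by dsimp; omega)) (by dsimp; omega)]
  · rintro ⟨y, hy, rfl⟩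
    rcases Nat.eq_zero_or_pos y.2 with hy2 | hy2
    · refine ⟨(k, 1), by dsimp; omega, ?_⟩
      rw [lowerRect, rect_eq_Icc_one (x := (k - 1, 1)) (Or.inl rfl) le_rfl,
        rect_eq_Icc_one (Or.inr hy2) (by omega)]
    · exact ⟨(y.1 + 1, y.2), by dsimp; omega, rfl⟩

theorem image_rect_Iic_sdiff_Ici (hk : 1 ≤ k) (hkn : k ≤ n) :
    rect k '' (Set.Iic (k - 1, n - k) \ Set.Ici 1) = {X | IsIntervalSet n X ∧ X.card = k} := by
  ext X
  simp only [Set.mem_image, Set.mem_sdiff, Set.mem_Iic, Set.mem_Ici, Prod.le_def, Prod.fst_one,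
    Prod.snd_one, Set.mem_ofPred_eq]
  constructor
  · rintro ⟨x, ⟨hx, hx1⟩, rfl⟩
    refine ⟨⟨rect_subset_Icc (by omega) (by omega), ?_⟩, card_rect (by omega)⟩
    rcases Nat.eq_zero_or_pos x.1 with h | h
    · exact ⟨x.2 + 1, x.2 + k, by ext a; rw [mem_rect, mem_Icc]; omega⟩
    · exact ⟨1, k, rect_eq_Icc_one (Or.inr (by omega)) (by omega)⟩
  · rintro ⟨⟨hsub, a, b, rfl⟩, hcard⟩
    rw [Nat.card_Icc] at hcard
    have := mem_Icc.1 (hsub (mem_Icc.2 ⟨le_rfl, by omega⟩))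
    have := mem_Icc.1 (hsub (mem_Icc.2 ⟨by omega, le_rfl⟩))
    exact ⟨(0, a - 1), by dsimp; omega, by ext y; rw [mem_rect, mem_Icc]; dsimp; omega⟩

theorem image_lowerRect_Icc_sdiff_Iic (hk : 1 ≤ k) (hkn : k < n) :
    lowerRect k '' (Set.Icc 1 (k, n - k + 1) \ Set.Iic (k - 1, n - k)) =
      {X | IsCointervalSet n X ∧ X.card = k - 1} := by
  ext X
  simp only [Set.mem_image, Set.mem_sdiff, Set.mem_Icc, Set.mem_Iic, Prod.le_def, Prod.fst_one,
    Prod.snd_one, Set.mem_ofPred_eq]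
  constructor
  · rintro ⟨x, ⟨hx, hx'⟩, rfl⟩
    refine ⟨⟨rect_subset_Icc (by dsimp; omega) (by dsimp; omega), ?_⟩, card_lowerRect hx.2.1⟩
    rcases lt_or_eq_of_le hx.2.1 with h | h
    · exact ⟨x.1, x.1 + n - k, by ext a; simp only [mem_sdiff, mem_Icc, mem_lowerRect]; omega⟩
    · exact ⟨k, n, by ext a; simp only [mem_sdiff, mem_Icc, mem_lowerRect]; omega⟩
  · rintro ⟨⟨hsub, e, f, hef⟩, hcard⟩
    have hmem := fun a => Finset.ext_iff.1 hef a
    simp only [mem_sdiff, mem_Icc] at hmem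
    have hcompl : (Icc 1 n \ X).card = n - (k - 1) := by
      rw [card_sdiff_of_subset hsub, Nat.card_Icc, hcard]; rfl
    rw [hef, Nat.card_Icc] at hcompl
    have he := ((hmem e).2 ⟨le_rfl, by omega⟩).1
    have hf := ((hmem f).2 ⟨by omega, le_rfl⟩).1
    refine ⟨(e, n - k + 1), by dsimp; omega, ?_⟩
    ext a
    rw [mem_lowerRect]
    dsimp
    by_cases haX : a ∈ X
    · have := mem_Icc.1 (hsub haX)
      have := (hmem a).not.1 (by tauto)
      simp only [haX, iff_true]
      omega
    · have := hmem a
      simp only [haX, not_false_eq_true, and_true] at this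
      simp only [haX, iff_false]
      omega

end Rectangles

section FlipCollection

variable (n : ℕ) (J : Finset ℕ) (k : ℕ)

/-- The intervals and cointervals of `S_{J,k,□}` and `S_{J,k-1,□}` that no flip touches. -/
def outerColl : Set (Finset ℕ) :=
  {I | IsIntervalSet n I ∧ I.card ∈ J ∧ k < I.card} ∪
    {I | IsCointervalSet n I ∧ I.card ∈ J ∧ I.card < k - 1}

/-- The collection in which exactly the cells of `F` are flipped. The cells with `p = 0` or
`c = 0` are never flipped (they give the intervals of size `k`) and those with `p = k` or
`c = n - k + 1` always are (they give the cointervals of size `k - 1`). -/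
def flipColl (F : Set (ℕ × ℕ)) : Set (Finset ℕ) :=
  outerColl n J k ∪ rect k '' (Set.Iic (k - 1, n - k) \ F) ∪
    lowerRect k '' (F ∩ Set.Icc 1 (k, n - k + 1))

variable {n J k} {F : Set (ℕ × ℕ)} {x : ℕ × ℕ} {I : Finset ℕ}

theorem card_ne_of_mem_outerColl (hI : I ∈ outerColl n J k) : I.card ≠ k := by
  rcases hI with ⟨-, -, h⟩ | ⟨-, -, h⟩ <;> omega

theorem weaklySeparated_rect_of_mem_flipColl (hk : 1 ≤ k) (hkn : k ≤ n) (hF : IsUpperSet F)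
    (hx : x ∈ Set.Iic (k - 1, n - k) \ F) (hI : I ∈ flipColl n J k F) (hc : I.card ≤ k) :
    WeaklySeparated (rect k x) I := by
  have hxk : x.1 < k := by have := hx.1.1; omega
  rcases hI with ((⟨-, -, hc'⟩ | ⟨⟨-, e, f, hI⟩, -⟩) | ⟨y, ⟨hyb, -⟩, rfl⟩) |
    ⟨y, ⟨hyF, hy1, hyb⟩, rfl⟩
  · omega
  · exact weaklySeparated_of_compl_eq_Icc (rect_subset_Icc hxk.le (by have := hx.1.2; omega)) hI
      (by rwa [card_rect hxk.le])
  · have hyk : y.1 < k := by have := hyb.1; omega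
    rcases le_total x.1 y.1 with h | h
    · exact weaklySeparated_rect_of_prefix_subset hxk.le
        (fun a ha => by rw [mem_Icc] at ha; rw [mem_rect]; omega) hc
    · exact (weaklySeparated_rect_of_prefix_subset hyk.le
        (fun a ha => by rw [mem_Icc] at ha; rw [mem_rect]; omega) (card_rect hxk.le).le).symm
  · have hyx : ¬ (y.1 ≤ x.1 ∧ y.2 ≤ x.2) := fun h => hx.2 (hF (Prod.le_def.2 h) hyF)
    have hy1 : 1 ≤ y.1 := hy1.1
    rcases lt_or_ge x.1 y.1 with h | h
    · exact weaklySeparated_rect_of_prefix_subset hxk.le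
        (fun a ha => by rw [mem_Icc] at ha; rw [mem_lowerRect]; omega) hc
    · exact weaklySeparated_rect_lowerRect hxk hy1 h (by omega)

theorem weaklySeparated_lowerRect_of_mem_flipColl (hk : 1 ≤ k) (hkn : k ≤ n)
    (hx : x ∈ F ∩ Set.Icc 1 (k, n - k + 1)) (hI : I ∈ flipColl n J k F) (hc : I.card ≤ k - 1) :
    WeaklySeparated (lowerRect k x) I := by
  obtain ⟨-, -, hxb⟩ := hx
  rcases hI with ((⟨-, -, hc'⟩ | ⟨⟨-, e, f, hI⟩, -⟩) | ⟨y, ⟨hyb, -⟩, rfl⟩) |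
    ⟨y, ⟨-, -, hyb⟩, rfl⟩
  · omega
  · exact weaklySeparated_of_compl_eq_Icc
      (rect_subset_Icc (by dsimp; have := hxb.1; omega) (by have := hxb.2; dsimp; omega)) hI
      (by rwa [card_lowerRect hxb.1])
  · rw [card_rect (by have := hyb.1; omega)] at hc; omega
  · rcases le_total x.1 y.1 with h | h
    · exact weaklySeparated_rect_of_prefix_subset (by have := hxb.1; dsimp; omega)
        (fun a ha => by rw [mem_Icc] at ha; rw [mem_lowerRect]; omega) hc
    · exact (weaklySeparated_rect_of_prefix_subset (by have := hyb.1; dsimp; omega)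
        (fun a ha => by rw [mem_Icc] at ha; rw [mem_lowerRect]; omega)
        (card_lowerRect hxb.1).le).symm

theorem wsColl_flipColl (hk : 1 ≤ k) (hkn : k ≤ n) (hF : IsUpperSet F) :
    WSColl (flipColl n J k F) := by
  intro I hI I' hI'
  wlog hc : I'.card ≤ I.card generalizing I I' with H
  · exact (H I' hI' I hI (by omega)).symm
  rcases hI with ((⟨⟨-, a, b, rfl⟩, -⟩ | ⟨⟨hsub, -⟩, -, hIc⟩) | ⟨x, hx, rfl⟩) | ⟨x, hx, rfl⟩
  · exact weaklySeparated_Icc_left hc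
  · rcases hI' with ((⟨-, -, hc'⟩ | ⟨⟨-, e, f, hI'⟩, -⟩) | ⟨y, ⟨hyb, -⟩, rfl⟩) |
      ⟨y, ⟨-, -, hyb⟩, rfl⟩
    · omega
    · exact weaklySeparated_of_compl_eq_Icc hsub hI' hc
    · rw [card_rect (by have := hyb.1; omega)] at hc; omega
    · rw [card_lowerRect hyb.1] at hc; omega
  · exact weaklySeparated_rect_of_mem_flipColl hk hkn hF hx hI'
      (by rwa [card_rect (by have := hx.1.1; omega)] at hc)
  · exact weaklySeparated_lowerRect_of_mem_flipColl hk hkn hx hI'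
      (by rwa [card_lowerRect hx.2.2.1] at hc)

theorem flipColl_insert (hx : x ∈ Set.Icc 1 (k - 1, n - k)) :
    flipColl n J k (insert x F) = (flipColl n J k F \ {rect k x}) ∪ {lowerRect k x} := by
  have hx' := hx
  simp only [Set.mem_Icc, Prod.le_def, Prod.fst_one, Prod.snd_one] at hx'
  have hcard : (rect k x).card = k := card_rect (by omega)
  have hxb : x ∈ Set.Icc 1 (k, n - k + 1) := ⟨hx.1, by simp only [Prod.le_def]; omega⟩
  ext X
  simp only [flipColl, Set.mem_union, Set.mem_sdiff, Set.mem_singleton_iff, Set.mem_image,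
    Set.mem_insert_iff, Set.mem_inter_iff]
  constructor
  · rintro ((hX | ⟨y, ⟨hyb, hyx⟩, rfl⟩) | ⟨y, ⟨rfl | hyF, hyb⟩, rfl⟩)
    · exact Or.inl ⟨Or.inl (Or.inl hX), fun h => card_ne_of_mem_outerColl hX (h ▸ hcard)⟩
    · push Not at hyx
      exact Or.inl ⟨Or.inl (Or.inr ⟨y, ⟨hyb, hyx.2⟩, rfl⟩),
        fun h => hyx.1 (eq_of_rect_eq hx (by have := hyb.1; omega) h)⟩
    · exact Or.inr rfl
    · refine Or.inl ⟨Or.inr ⟨y, ⟨hyF, hyb⟩, rfl⟩, fun h => ?_⟩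
      have := congrArg Finset.card h
      rw [card_lowerRect hyb.2.1, hcard] at this
      omega
  · rintro (⟨(hX | ⟨y, ⟨hyb, hyF⟩, rfl⟩) | ⟨y, ⟨hyF, hyb⟩, rfl⟩, hne⟩ | rfl)
    · exact Or.inl (Or.inl hX)
    · exact Or.inl (Or.inr ⟨y, ⟨hyb, by rintro (rfl | h) <;> simp_all⟩, rfl⟩)
    · exact Or.inr ⟨y, ⟨Or.inr hyF, hyb⟩, rfl⟩
    · exact Or.inr ⟨x, ⟨Or.inl rfl, hxb⟩, rfl⟩

/-- Flipping `x = (p, c)` once `(p + 1, c)` and `(p, c + 1)` are flipped is a weak lowering flip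
with `L = flipBase k x` and `(i, j, k) = (p, p + c, c + k)`; its witnesses are the neighbouring
cells `(p + 1, c)`, `(p, c + 1)` (flipped) and `(p, c - 1)`, `(p - 1, c)` (unflipped). -/
theorem loweringFlip_flipColl_insert (hF : IsUpperSet F) (hx : x ∈ Set.Icc 1 (k - 1, n - k))
    (hxF : x ∉ F) (hx1 : (x.1 + 1, x.2) ∈ F) (hx2 : (x.1, x.2 + 1) ∈ F) :
    LoweringFlip n (flipColl n J k F) (flipColl n J k (insert x F)) := by
  obtain ⟨p, c⟩ := x
  have hx' := hx
  simp only [Set.mem_Icc, Prod.le_def, Prod.fst_one, Prod.snd_one] at hx'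
  obtain ⟨hLik, hLj, hLi, hLk, hLij, hLjk⟩ := flipBase_union (k := k) hx'.1.1 hx'.1.2 (by omega)
  have hK : ∀ q d, q ≤ p → d ≤ c → rect k (q, d) ∈ flipColl n J k F := fun q d hq hd =>
    Or.inl (Or.inr ⟨(q, d), ⟨by simp only [Set.mem_Iic, Prod.mk_le_mk]; omega,
      fun h => hxF (hF (Prod.mk_le_mk.2 ⟨hq, hd⟩) h)⟩, rfl⟩)
  have hR : ∀ q d, (q, d) ∈ F → p ≤ q → c ≤ d → q ≤ k → d ≤ n - k + 1 →
      lowerRect k (q, d) ∈ flipColl n J k F := fun q d hqd hq hd hqk hdn =>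
    Or.inr ⟨(q, d), ⟨hqd, ⟨(by omega : 1 ≤ q), (by omega : 1 ≤ d)⟩, ⟨hqk, hdn⟩⟩, rfl⟩
  refine ⟨flipBase k (p, c), p, p + c, c + k, fun a ha => ?_, ?_, ?_, ?_, ?_, ?_, ?_,
    by omega, by omega, ?_, ?_, ?_, ?_, ?_, ?_⟩
  · simp only [flipBase, mem_union, mem_Icc] at ha
    rw [mem_Icc]
    omega
  iterate 3 (rw [mem_Icc]; omega)
  iterate 3 (simp only [flipBase, mem_union, mem_Icc]; omega)
  · rw [hLik]; exact hK p c le_rfl le_rfl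
  · rw [hLi]; exact hR _ _ hx1 (by omega) le_rfl (by omega) (by omega)
  · rw [hLk]; exact hR _ _ hx2 le_rfl (by omega) (by omega) (by omega)
  · rw [hLij]; exact hK _ _ le_rfl (by omega)
  · rw [hLjk]; exact hK _ _ (by omega) le_rfl
  · rw [hLik, hLj]; exact flipColl_insert hx

theorem flipColl_Ici_sdiff_Iic (hk : 1 ≤ k) (hkn : k < n) (hJ : k - 1 ∈ J) :
    flipColl n J k (Set.Ici 1 \ Set.Iic (k - 1, n - k)) = SJrect n J k := by
  have hK : Set.Iic (k - 1, n - k) \ (Set.Ici 1 \ Set.Iic (k - 1, n - k)) =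
      Set.Iic (k - 1, n - k) :=
    sdiff_eq_self_iff_disjoint.2 disjoint_sdiff_self_left
  have hR : (Set.Ici 1 \ Set.Iic (k - 1, n - k)) ∩ Set.Icc 1 (k, n - k + 1) =
      Set.Icc 1 (k, n - k + 1) \ Set.Iic (k - 1, n - k) := by
    rw [Set.sdiff_inter_right_comm, Set.inter_eq_right.2 Set.Icc_subset_Ici_self]
  rw [flipColl, hK, hR, image_rect_Iic hkn.le,
    image_lowerRect_Icc_sdiff_Iic hk hkn]
  ext X
  simp only [SJrect, outerColl, Set.mem_union, Set.mem_ofPred_eq]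
  grind

theorem flipColl_Ici (hk : 2 ≤ k) (hkn : k < n) (hJ : k ∈ J) :
    flipColl n J k (Set.Ici 1) = SJrect n J (k - 1) := by
  rw [flipColl, Set.inter_eq_right.2 Set.Icc_subset_Ici_self,
    image_rect_Iic_sdiff_Ici (by omega) hkn.le, image_lowerRect_Icc hk hkn.le]
  ext X
  simp only [SJrect, outerColl, Set.mem_union, Set.mem_ofPred_eq]
  grind

end FlipCollection

def WSLoweringFlip (n : ℕ) (S S' : Set (Finset ℕ)) : Prop :=
  LoweringFlip n S S' ∧ WSColl S ∧ WSColl S'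

section Chains

variable {n k : ℕ} {J : Finset ℕ}

/-- Flip the cells one at a time, each time a maximal unflipped one. -/
theorem reflTransGen_flipColl (hk : 1 ≤ k) (hkn : k ≤ n) {F : Set (ℕ × ℕ)} (hF : IsUpperSet F)
    (hF₀ : Set.Ici 1 \ Set.Iic (k - 1, n - k) ⊆ F) (hF₁ : F ⊆ Set.Ici 1) :
    ReflTransGen (WSLoweringFlip n) (flipColl n J k F) (flipColl n J k (Set.Ici 1)) := by
  have hfin : ∀ G, Set.Ici 1 \ Set.Iic (k - 1, n - k) ⊆ G → (Set.Ici 1 \ G).Finite :=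
    fun G hG => (Set.finite_Icc 1 (k - 1, n - k)).subset
      fun y hy => ⟨hy.1, by_contra fun h => hy.2 (hG ⟨hy.1, h⟩)⟩
  induction hN : (Set.Ici 1 \ F).ncard generalizing F with
  | zero =>
    rw [Set.ncard_eq_zero (hfin F hF₀), Set.sdiff_eq_empty] at hN
    rw [hF₁.antisymm hN]
  | succ N ih =>
    obtain ⟨x, hx⟩ := (hfin F hF₀).exists_maximal ((Set.ncard_pos (hfin F hF₀)).1 (by omega))
    have hxF' : ∀ y, x < y → y ∈ F := fun y hxy => by_contra fun hyF =>
      hxy.not_ge (hx.2 ⟨le_trans hx.1.1 hxy.le, hyF⟩ hxy.le)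
    have hxb : x ∈ Set.Icc 1 (k - 1, n - k) :=
      ⟨hx.1.1, by_contra fun h => hx.1.2 (hF₀ ⟨hx.1.1, h⟩)⟩
    have hF' : IsUpperSet (insert x F) := by
      rintro a b hab (rfl | ha)
      · rcases hab.eq_or_lt with rfl | hab
        · exact Set.mem_insert _ _
        · exact Set.mem_insert_of_mem _ (hxF' b hab)
      · exact Set.mem_insert_of_mem _ (hF hab ha)
    refine .head ⟨loweringFlip_flipColl_insert hF hxb hx.1.2 (hxF' _ ?_) (hxF' _ ?_),
      wsColl_flipColl hk hkn hF, wsColl_flipColl hk hkn hF'⟩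
      (ih hF' (hF₀.trans (Set.subset_insert _ _)) (Set.insert_subset hx.1.1 hF₁) ?_)
    · exact Prod.lt_iff.2 (Or.inl ⟨Nat.lt_succ_self _, le_rfl⟩)
    · exact Prod.lt_iff.2 (Or.inr ⟨le_rfl, Nat.lt_succ_self _⟩)
    · rw [← Set.union_singleton, ← Set.sdiff_sdiff, Set.ncard_sdiff_singleton_of_mem hx.1, hN]
      rfl

theorem reflTransGen_SJrect (hk : 2 ≤ k) (hkn : k < n) (hJk : k ∈ J) (hJk' : k - 1 ∈ J) :
    ReflTransGen (WSLoweringFlip n) (SJrect n J k) (SJrect n J (k - 1)) := by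
  rw [← flipColl_Ici_sdiff_Iic (by omega) hkn hJk', ← flipColl_Ici hk hkn hJk]
  exact reflTransGen_flipColl (by omega) hkn.le
    ((isUpperSet_Ici 1).sdiff_of_isLowerSet (isLowerSet_Iic _)) subset_rfl Set.sdiff_subset

theorem wsColl_SJrect {r s l : ℕ} (hr : 1 ≤ r) (hrs : r < s) (hs : s < n) (hl : l ∈ Icc r s) :
    WSColl (SJrect n (Icc r s) l) := by
  rw [mem_Icc] at hl
  rcases hl.1.eq_or_lt with rfl | hrl
  · have h := flipColl_Ici (n := n) (k := r + 1) (J := Icc r s) (by omega) (by omega)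
      (mem_Icc.2 ⟨by omega, by omega⟩)
    rw [Nat.add_sub_cancel] at h
    rw [← h]
    exact wsColl_flipColl (by omega) (by omega) (isUpperSet_Ici 1)
  · rw [← flipColl_Ici_sdiff_Iic (by omega) (by omega) (mem_Icc.2 ⟨by omega, by omega⟩)]
    exact wsColl_flipColl (by omega) (by omega)
      ((isUpperSet_Ici 1).sdiff_of_isLowerSet (isLowerSet_Iic _))

theorem flipEquiv_SJrect {r s l l' : ℕ} (hr : 1 ≤ r) (hrs : r < s) (hs : s < n)
    (hl : l ∈ Icc r s) (hl' : l' ∈ Icc r s) :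
    FlipEquiv n (SJrect n (Icc r s) l) (SJrect n (Icc r s) l') := by
  have hstep : ∀ i, r ≤ i → i < s →
      ReflTransGen (WSLoweringFlip n) (SJrect n (Icc r s) (i + 1)) (SJrect n (Icc r s) i) :=
    fun i hri his => reflTransGen_SJrect (by omega) (by omega) (mem_Icc.2 ⟨by omega, by omega⟩)
      (mem_Icc.2 ⟨by omega, by omega⟩)
  obtain ⟨hl1, hl2⟩ := mem_Icc.1 hl
  obtain ⟨hl1', hl2'⟩ := mem_Icc.1 hl'
  have hpath : ReflTransGen (SymmGen (WSLoweringFlip n)) (SJrect n (Icc r s) l)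
      (SJrect n (Icc r s) l') := by
    refine ReflTransGen.lift' (r := fun i j => ReflTransGen (SymmGen (WSLoweringFlip n))
      (SJrect n (Icc r s) i) (SJrect n (Icc r s) j)) _ (fun _ _ h => h)
      _ _ (reflTransGen_of_succ _ (fun i hi => ?_) (fun i hi => ?_))
    · rw [Order.succ_eq_add_one]
      exact ReflTransGen.mono (fun _ _ => Or.inr) _ _
        (ReflTransGen.swap _ _ (hstep i (by grind) (by grind)))
    · rw [Order.succ_eq_add_one]
      exact ReflTransGen.mono (fun _ _ => Or.inl) _ _ (hstep i (by grind) (by grind))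
  unfold FlipEquiv
  refine ReflTransGen.exists_seq (R := fun A B => RaisingFlip n A B ∨ LoweringFlip n A B)
    (ReflTransGen.mono (fun A B h => ?_) _ _ hpath) (wsColl_SJrect hr hrs hs hl)
  rcases h with h | h
  · exact ⟨Or.inr h.1, h.2.2⟩
  · exact ⟨Or.inl (raisingFlip_of_loweringFlip h.1 h.2.1), h.2.1⟩

end Chains

theorem extended_rectangle_collections_flip_equivalent_general
    (n : ℕ) (r s k : ℕ)
    (hr : 1 ≤ r) (hs : s ≤ n - 1)
    (hk : k ∈ Finset.Icc r s) (hk1 : k - 1 ∈ Finset.Icc r s) :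
    (∃ (m : ℕ) (C : ℕ → Set (Finset ℕ)),
      C 0 = SJrect n (Finset.Icc r s) k ∧
      C m = SJrect n (Finset.Icc r s) (k - 1) ∧
      (∀ t < m, LoweringFlip n (C t) (C (t + 1))) ∧
      (∀ t ≤ m, WSColl (C t))) ∧
    (∀ l l' : ℕ, l ∈ Finset.Icc r s → l' ∈ Finset.Icc r s →
      FlipEquiv n (SJrect n (Finset.Icc r s) l) (SJrect n (Finset.Icc r s) l')) := by
  obtain ⟨hrk, hks⟩ := mem_Icc.1 hk
  obtain ⟨hrk', -⟩ := mem_Icc.1 hk1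
  refine ⟨?_, fun l l' hl hl' => flipEquiv_SJrect hr (by omega) (by omega) hl hl'⟩
  exact ReflTransGen.exists_seq (R := LoweringFlip n)
    (ReflTransGen.mono (fun _ _ h => ⟨h.1, h.2.2⟩) _ _
      (reflTransGen_SJrect (by omega) (by omega) hk hk1))
    (wsColl_SJrect hr (by omega) (by omega) hk)

/-- **Flip equivalence of extended rectangle collections.**
Let `J = [r,s] ⊆ {1,…,n−1}` be an interval and `k ∈ J` with `k−1 ∈ J`.  Then
`S_{J,k−1,□}` is obtained from `S_{J,k,□}` by a finite sequence of weak lowering flips,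
each intermediate collection being weakly separated; consequently, all the collections
`S_{J,l,□}` with `l ∈ J` are pairwise flip equivalent. -/
theorem extended_rectangle_collections_flip_equivalent
    (n : ℕ) (hn : 2 ≤ n) (r s k : ℕ)
    (hr : 1 ≤ r) (hrs : r ≤ s) (hs : s ≤ n - 1)
    (hk : k ∈ Finset.Icc r s) (hk1 : k - 1 ∈ Finset.Icc r s) :
    (∃ (m : ℕ) (C : ℕ → Set (Finset ℕ)),
      C 0 = SJrect n (Finset.Icc r s) k ∧
      C m = SJrect n (Finset.Icc r s) (k - 1) ∧
      (∀ t < m, LoweringFlip n (C t) (C (t + 1))) ∧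
      (∀ t ≤ m, WSColl (C t))) ∧
    (∀ l l' : ℕ, l ∈ Finset.Icc r s → l' ∈ Finset.Icc r s →
      FlipEquiv n (SJrect n (Finset.Icc r s) l) (SJrect n (Finset.Icc r s) l')) :=
  extended_rectangle_collections_flip_equivalent_general n r s k hr hs hk hk1
end

section
/- Let n ≥ 1 and let I, J be nonempty subsets of [n] = {1,…,n}. Then h(pad(I), pad(J)) = h(I, J) + (n − |J|), where pad(I) := I ∪ {n+|I|+1, n+|I|+2, …, 2n} ⊆ {1,…,2n} is the padding of I to an n-element set. -/
/-- `S(I,d)`: the set of the `d` smallest elements of `I`. -/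
def smallSet (I : Finset ℕ) (d : ℕ) : Finset ℕ := ((Finset.sort I (· ≤ ·)).take d).toFinset

/-- `E(I,d)`: the set of the `d` largest elements of `I`. -/
def largeSet (I : Finset ℕ) (d : ℕ) : Finset ℕ :=
  ((Finset.sort I (· ≤ ·)).drop (I.card - d)).toFinset

/-- `A ⪯ B`: the sets have the same cardinality `d` and for each `1 ≤ s ≤ d`
the `s`-th smallest element of `A` is at most the `s`-th smallest element of `B`. -/
def PrecLE (A B : Finset ℕ) : Prop :=
  A.card = B.card ∧
  ∀ s < A.card, (Finset.sort A (· ≤ ·)).getD s 0 ≤ (Finset.sort B (· ≤ ·)).getD s 0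

/-- `h(I,J) = max{ d : 0 ≤ d ≤ min(|I|,|J|) and S(I,d) ⪯ E(J,d) }`.
In the paper this equals `dim Hom_D(M_I, M_J)` for rank one modules over the
Auslander algebra `D` of `ℂ[t]/(tⁿ)`. -/
noncomputable def homDim (I J : Finset ℕ) : ℕ :=
  sSup {d | d ≤ min I.card J.card ∧ PrecLE (smallSet I d) (largeSet J d)}

/-- The padding of `I ⊆ [n]` to an `n`-element subset of `[2n]`:
`pad(I) = I ∪ {n+|I|+1, …, 2n}`. -/
def pad (n : ℕ) (I : Finset ℕ) : Finset ℕ := I ∪ Finset.Icc (n + I.card + 1) (2 * n)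

set_option linter.unusedVariables false

lemma getD_take' {l : List ℕ} {d s : ℕ} (h : s < d) (h2 : s < l.length) :
    (l.take d).getD s 0 = l.getD s 0 := by
  rw [List.getD_eq_getElem _ _ (by simp [List.length_take]; omega),
    List.getD_eq_getElem _ _ h2, List.getElem_take]

lemma getD_drop' {l : List ℕ} {k s : ℕ} (h : k + s < l.length) :
    (l.drop k).getD s 0 = l.getD (k + s) 0 := by
  rw [List.getD_eq_getElem _ _ (by simp [List.length_drop]; omega),
    List.getD_eq_getElem _ _ h, List.getElem_drop]

lemma sort_smallSet (A : Finset ℕ) (d : ℕ) :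
    Finset.sort (smallSet A d) (· ≤ ·) = (Finset.sort A (· ≤ ·)).take d := by
  rw [smallSet]
  exact (List.toFinset_sort _ ((List.take_sublist _ _).nodup (Finset.sort_nodup _ _))).mpr
    (List.Pairwise.sublist (List.take_sublist _ _) (Finset.pairwise_sort _ _))

lemma sort_largeSet (A : Finset ℕ) (d : ℕ) :
    Finset.sort (largeSet A d) (· ≤ ·) = (Finset.sort A (· ≤ ·)).drop (A.card - d) := by
  rw [largeSet]
  exact (List.toFinset_sort _ ((List.drop_sublist _ _).nodup (Finset.sort_nodup _ _))).mpr
    (List.Pairwise.sublist (List.drop_sublist _ _) (Finset.pairwise_sort _ _))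

lemma card_smallSet (A : Finset ℕ) {d : ℕ} (h : d ≤ A.card) : (smallSet A d).card = d := by
  rw [smallSet, List.card_toFinset,
    List.dedup_eq_self.2 ((List.take_sublist _ _).nodup (Finset.sort_nodup _ _)),
    List.length_take, Finset.length_sort]
  omega

lemma card_largeSet (A : Finset ℕ) {d : ℕ} (h : d ≤ A.card) : (largeSet A d).card = d := by
  rw [largeSet, List.card_toFinset,
    List.dedup_eq_self.2 ((List.drop_sublist _ _).nodup (Finset.sort_nodup _ _)),
    List.length_drop, Finset.length_sort]
  omega

lemma precLE_iff (A B : Finset ℕ) {d : ℕ} (hA : d ≤ A.card) (hB : d ≤ B.card) :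
    PrecLE (smallSet A d) (largeSet B d) ↔
      ∀ s < d, (Finset.sort A (· ≤ ·)).getD s 0 ≤
        (Finset.sort B (· ≤ ·)).getD (B.card - d + s) 0 := by
  rw [PrecLE, card_smallSet A hA, card_largeSet B hB, sort_smallSet, sort_largeSet]
  constructor
  · rintro ⟨-, h2⟩ s hs
    have := h2 s hs
    rwa [getD_take' hs (by rw [Finset.length_sort]; omega),
      getD_drop' (by rw [Finset.length_sort]; omega)] at this
  · intro h2
    refine ⟨rfl, fun s hs => ?_⟩
    rw [getD_take' hs (by rw [Finset.length_sort]; omega),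
      getD_drop' (by rw [Finset.length_sort]; omega)]
    exact h2 s hs

lemma getD_sort_le {n : ℕ} {I : Finset ℕ} (hI : I ⊆ Finset.Icc 1 n) {i : ℕ}
    (hi : i < I.card) : (Finset.sort I (· ≤ ·)).getD i 0 ≤ n := by
  have hl : i < (Finset.sort I (· ≤ ·)).length := by rw [Finset.length_sort]; omega
  rw [List.getD_eq_getElem _ _ hl]
  have hm : (Finset.sort I (· ≤ ·))[i] ∈ I :=
    (Finset.mem_sort (α := ℕ) (· ≤ ·)).1 (List.getElem_mem hl)
  exact (Finset.mem_Icc.1 (hI hm)).2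

lemma sort_pad {n : ℕ} {I : Finset ℕ} (hI : I ⊆ Finset.Icc 1 n) :
    Finset.sort (pad n I) (· ≤ ·) =
      Finset.sort I (· ≤ ·) ++ List.range' (n + I.card + 1) (n - I.card) := by
  have hpn : I.card ≤ n := by
    have := Finset.card_le_card hI
    rwa [Nat.card_Icc, Nat.add_sub_cancel] at this
  have hle : ∀ x ∈ Finset.sort I (· ≤ ·), ∀ y ∈ List.range' (n + I.card + 1) (n - I.card),
      x ≤ y := by
    intro x hx y hy
    have hx' : x ≤ n := (Finset.mem_Icc.1 (hI ((Finset.mem_sort _).1 hx))).2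
    have hy' : n + I.card + 1 ≤ y := (List.mem_range'_1.1 hy).1
    omega
  have hnd : (Finset.sort I (· ≤ ·) ++ List.range' (n + I.card + 1) (n - I.card)).Nodup := by
    rw [List.nodup_append]
    refine ⟨Finset.sort_nodup _ _, List.nodup_range', ?_⟩
    intro x hx y hx2 rfl
    have hx' : x ≤ n := (Finset.mem_Icc.1 (hI ((Finset.mem_sort _).1 hx))).2
    have hy' : n + I.card + 1 ≤ x := (List.mem_range'_1.1 hx2).1
    omega
  have hsorted : (Finset.sort I (· ≤ ·) ++
      List.range' (n + I.card + 1) (n - I.card)).Pairwise (· ≤ ·) := by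
    rw [List.pairwise_append]
    exact ⟨Finset.pairwise_sort _ _, List.pairwise_le_range', hle⟩
  have htF : (Finset.sort I (· ≤ ·) ++
      List.range' (n + I.card + 1) (n - I.card)).toFinset = pad n I := by
    rw [List.toFinset_append, Finset.sort_toFinset, pad]
    congr 1
    ext m
    simp only [List.mem_toFinset, List.mem_range'_1, Finset.mem_Icc]
    omega
  rw [← htF]
  exact (List.toFinset_sort _ hnd).mpr hsorted

lemma card_pad {n : ℕ} {I : Finset ℕ} (hI : I ⊆ Finset.Icc 1 n) : (pad n I).card = n := by
  have hpn : I.card ≤ n := by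
    have := Finset.card_le_card hI
    rwa [Nat.card_Icc, Nat.add_sub_cancel] at this
  have := congrArg List.length (sort_pad hI)
  rw [Finset.length_sort, List.length_append, Finset.length_sort, List.length_range'] at this
  omega

lemma getD_sort_pad {n : ℕ} {I : Finset ℕ} (hI : I ⊆ Finset.Icc 1 n) {i : ℕ} (hi : i < n) :
    (Finset.sort (pad n I) (· ≤ ·)).getD i 0 =
      if i < I.card then (Finset.sort I (· ≤ ·)).getD i 0 else n + 1 + i := by
  have hpn : I.card ≤ n := by
    have := Finset.card_le_card hI
    rwa [Nat.card_Icc, Nat.add_sub_cancel] at this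
  rw [sort_pad hI]
  by_cases hip : i < I.card
  · rw [if_pos hip, List.getD_eq_getElem _ _
      (by simp [List.length_append, Finset.length_sort, List.length_range']; omega),
      List.getElem_append_left (by rw [Finset.length_sort]; omega),
      List.getD_eq_getElem _ _ (by rw [Finset.length_sort]; omega)]
  · rw [if_neg hip, List.getD_eq_getElem _ _
      (by simp [List.length_append, Finset.length_sort, List.length_range']; omega),
      List.getElem_append_right (by rw [Finset.length_sort]; omega)]
    rw [List.getElem_range'_1]
    rw [Finset.length_sort]
    omega


/-- **Hom dimensions and padding.**  For nonempty `I, J ⊆ [n]`,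
`h(pad(I), pad(J)) = h(I, J) + (n − |J|)`. -/
theorem homDim_pad (n : ℕ) (hn : 1 ≤ n) (I J : Finset ℕ)
    (hI : I ⊆ Finset.Icc 1 n) (hJ : J ⊆ Finset.Icc 1 n)
    (hI0 : I.Nonempty) (hJ0 : J.Nonempty) :
    homDim (pad n I) (pad n J) = homDim I J + (n - J.card) := by
  have hpn : I.card ≤ n := by
    have := Finset.card_le_card hI
    rwa [Nat.card_Icc, Nat.add_sub_cancel] at this
  have hqn : J.card ≤ n := by
    have := Finset.card_le_card hJ
    rwa [Nat.card_Icc, Nat.add_sub_cancel] at this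
  set p := I.card with hp
  set q := J.card with hq
  set T : Set ℕ := {d | d ≤ min p q ∧ PrecLE (smallSet I d) (largeSet J d)} with hT
  have hbddT : BddAbove T := ⟨min p q, fun d hd => hd.1⟩
  have hT0 : (0:ℕ) ∈ T := by
    refine ⟨Nat.zero_le _, ?_⟩
    rw [precLE_iff I J (Nat.zero_le _) (Nat.zero_le _)]
    intro s hs; omega
  have hhmem : homDim I J ∈ T := Nat.sSup_mem ⟨0, hT0⟩ hbddT
  set h := homDim I J with hhdef
  have hhp : h ≤ p := le_trans hhmem.1 (min_le_left _ _)
  have hhq : h ≤ q := le_trans hhmem.1 (min_le_right _ _)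
  have hhcond := (precLE_iff I J (le_trans hhmem.1 (min_le_left _ _))
    (le_trans hhmem.1 (min_le_right _ _))).1 hhmem.2
  set d0 := h + (n - q) with hd0
  have hcardI : (pad n I).card = n := card_pad hI
  have hcardJ : (pad n J).card = n := card_pad hJ
  have hmem : d0 ∈ {d | d ≤ min (pad n I).card (pad n J).card ∧
      PrecLE (smallSet (pad n I) d) (largeSet (pad n J) d)} := by
    constructor
    · rw [hcardI, hcardJ]; simp; omega
    · rw [precLE_iff (pad n I) (pad n J) (by omega) (by omega), hcardJ]
      intro s hs
      rw [getD_sort_pad hI (by omega), getD_sort_pad hJ (by omega)]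
      by_cases hsh : s < h
      · have h1 : s < p := by omega
        have h2 : n - d0 + s < q := by omega
        rw [if_pos h1, if_pos h2]
        have := hhcond s hsh
        have heq : n - d0 + s = q - h + s := by omega
        rw [heq]
        exact this
      · have h2 : ¬ (n - d0 + s < q) := by omega
        rw [if_neg h2]
        by_cases h1 : s < p
        · rw [if_pos h1]
          have := getD_sort_le hI h1
          omega
        · rw [if_neg h1]; omega
  refine le_antisymm ?_ ?_
  · rw [homDim]
    apply csSup_le ⟨d0, hmem⟩
    intro d hd
    have hdn : d ≤ n := by
      have := hd.1; rw [hcardI, hcardJ] at this; omega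
    by_cases hdq : d ≤ n - q
    · omega
    · set d' := d - (n - q) with hd'
      have hcond := (precLE_iff (pad n I) (pad n J) (by omega) (by omega)).1 hd.2
      rw [hcardJ] at hcond
      have hd'p : d' ≤ p := by
        by_contra hcon
        have hpd : p < d := by omega
        have := hcond p (by omega)
        rw [getD_sort_pad hI (by omega), getD_sort_pad hJ (by omega)] at this
        rw [if_neg (by omega), if_pos (by omega)] at this
        have := getD_sort_le hJ (show n - d + p < q by omega)
        omega
      have hd'T : d' ∈ T := by
        refine ⟨by simp; omega, ?_⟩
        rw [precLE_iff I J (by omega) (by omega)]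
        intro s hs
        have := hcond s (by omega)
        rw [getD_sort_pad hI (by omega), getD_sort_pad hJ (by omega),
          if_pos (by omega), if_pos (by omega)] at this
        have heq : q - d' + s = n - d + s := by omega
        rw [heq]
        exact this
      have : d' ≤ h := le_csSup hbddT hd'T
      omega
  · rw [homDim]
    exact le_csSup ⟨n, fun d hd => by have := hd.1; rw [hcardI, hcardJ] at this; omega⟩ hmem
end

section
/- Let n ≥ 1, let I, J be subsets of [n] = {1,…,n}, and let a ∈ I ∩ J. Then h(I, J) = h(I \ {a}, J \ {a}) + 1. -/
/-! ### Auxiliary lemmas -/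

/-- The list version of the defining condition of `homDim`. -/
def LCond (L M : List ℕ) (d : ℕ) : Prop :=
  ∀ s < d, L.getD s 0 ≤ M.getD (M.length - d + s) 0

lemma getD_lt_getD {L : List ℕ} (h : L.Pairwise (· < ·)) {i j : ℕ}
    (hij : i < j) (hj : j < L.length) : L.getD i 0 < L.getD j 0 := by
  rw [List.getD_eq_getElem _ _ (by omega), List.getD_eq_getElem _ _ hj]
  exact List.pairwise_iff_getElem.mp h i j (by omega) hj hij

lemma getD_le_getD {L : List ℕ} (h : L.Pairwise (· < ·)) {i j : ℕ}
    (hij : i ≤ j) (hj : j < L.length) : L.getD i 0 ≤ L.getD j 0 := by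
  rcases Nat.lt_or_ge i j with h' | h'
  · exact (getD_lt_getD h h' hj).le
  · have : i = j := by omega
    rw [this]

lemma getD_erase_lt {L : List ℕ} {a : ℕ} (ha : a ∈ L) {s : ℕ}
    (hs : s < L.idxOf a) : (L.erase a).getD s 0 = L.getD s 0 := by
  have hk : L.idxOf a < L.length := List.idxOf_lt_length_iff.mpr ha
  rw [List.erase_eq_eraseIdx_of_idxOf rfl,
    List.getD_eq_getElem _ _ (by rw [List.length_eraseIdx_of_lt hk]; omega),
    List.getElem_eraseIdx_of_lt _ hs, List.getD_eq_getElem _ _ (by omega)]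

lemma getD_erase_ge {L : List ℕ} {a : ℕ} (ha : a ∈ L) {s : ℕ}
    (hks : L.idxOf a ≤ s) (hs : s + 1 < L.length) :
    (L.erase a).getD s 0 = L.getD (s + 1) 0 := by
  have hk : L.idxOf a < L.length := List.idxOf_lt_length_iff.mpr ha
  rw [List.erase_eq_eraseIdx_of_idxOf rfl,
    List.getD_eq_getElem _ _ (by rw [List.length_eraseIdx_of_lt hk]; omega),
    List.getElem_eraseIdx_of_ge _ hks, List.getD_eq_getElem _ _ hs]

lemma getD_indexOf' {L : List ℕ} {a : ℕ} (ha : a ∈ L) :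
    L.getD (L.idxOf a) 0 = a := by
  have hk : L.idxOf a < L.length := List.idxOf_lt_length_iff.mpr ha
  rw [List.getD_eq_getElem _ _ hk]
  exact List.getElem_idxOf hk

lemma length_erase' {L : List ℕ} {a : ℕ} (ha : a ∈ L) :
    (L.erase a).length = L.length - 1 := by
  have hk : L.idxOf a < L.length := List.idxOf_lt_length_iff.mpr ha
  rw [List.erase_eq_eraseIdx_of_idxOf rfl, List.length_eraseIdx_of_lt hk]

lemma sort_erase (I : Finset ℕ) (a : ℕ) :
    Finset.sort (I.erase a) (· ≤ ·) = (Finset.sort I (· ≤ ·)).erase a := by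
  have nod : ((Finset.sort I (· ≤ ·)).erase a).Nodup :=
    (Finset.sort_nodup (s := I) _).erase a
  have srt : ((Finset.sort I (· ≤ ·)).erase a).Pairwise (· ≤ ·) :=
    List.Pairwise.sublist List.erase_sublist (Finset.pairwise_sort (s := I) _)
  have ht : ((Finset.sort I (· ≤ ·)).erase a).toFinset = I.erase a := by
    ext x
    rw [List.mem_toFinset, (Finset.sort_nodup (s := I) _).mem_erase_iff, Finset.mem_erase,
      Finset.mem_sort]
  rw [← ht]
  exact (List.toFinset_sort _ nod).mpr srt

/-- Erasing a common element shifts the condition by one. -/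
lemma lcond_erase {L M : List ℕ} (hL : L.Pairwise (· < ·)) (hM : M.Pairwise (· < ·))
    {a : ℕ} (haL : a ∈ L) (haM : a ∈ M) {d : ℕ}
    (hdL : d + 1 ≤ L.length) (hdM : d + 1 ≤ M.length) :
    LCond L M (d + 1) ↔ LCond (L.erase a) (M.erase a) d := by
  set k := L.idxOf a with hkdef
  set l := M.idxOf a with hldef
  have hkp : k < L.length := List.idxOf_lt_length_iff.mpr haL
  have hlq : l < M.length := List.idxOf_lt_length_iff.mpr haM
  have hLk : L.getD k 0 = a := getD_indexOf' haL
  have hMl : M.getD l 0 = a := getD_indexOf' haM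
  have hMlen : (M.erase a).length = M.length - 1 := length_erase' haM
  constructor
  · intro H s hs
    rw [hMlen]
    by_cases hsk : s < k
    · rw [getD_erase_lt haL hsk]
      by_cases htl : M.length - 1 - d + s < l
      · rw [getD_erase_lt haM htl]
        have h1 := H s (by omega)
        rwa [show M.length - (d + 1) + s = M.length - 1 - d + s from by omega] at h1
      · push_neg at htl
        rw [getD_erase_ge haM htl (by omega)]
        have h1 := H s (by omega)
        exact le_trans h1 (getD_le_getD hM (by omega) (by omega))
    · push_neg at hsk
      rw [getD_erase_ge haL hsk (by omega)]
      have h1 := H (s + 1) (by omega)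
      have htl : l ≤ M.length - 1 - d + s := by
        by_contra hc
        push_neg at hc
        have h2 : M.getD (M.length - (d + 1) + (s + 1)) 0 ≤ a := by
          rw [← hMl]; exact getD_le_getD hM (by omega) hlq
        have h3 : a < L.getD (s + 1) 0 := by
          rw [← hLk]; exact getD_lt_getD hL (by omega) (by omega)
        omega
      rw [getD_erase_ge haM htl (by omega)]
      rwa [show M.length - (d + 1) + (s + 1) = M.length - 1 - d + s + 1 from by omega] at h1
  · intro H s hs
    by_cases hsk : k < s
    · have e1 : L.getD s 0 = (L.erase a).getD (s - 1) 0 := by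
        rw [getD_erase_ge haL (by omega) (by omega), show s - 1 + 1 = s from by omega]
      rw [e1]
      have h1 := H (s - 1) (by omega)
      rw [hMlen] at h1
      by_cases htl : M.length - 1 - d + (s - 1) < l
      · rw [getD_erase_lt haM htl] at h1
        exact le_trans h1 (getD_le_getD hM (by omega) (by omega))
      · push_neg at htl
        rw [getD_erase_ge haM htl (by omega)] at h1
        rwa [show M.length - 1 - d + (s - 1) + 1 = M.length - (d + 1) + s from by omega] at h1
    · push_neg at hsk
      by_cases hlt : l ≤ M.length - (d + 1) + s
      · calc L.getD s 0 ≤ L.getD k 0 := getD_le_getD hL hsk hkp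
          _ = a := hLk
          _ = M.getD l 0 := hMl.symm
          _ ≤ M.getD (M.length - (d + 1) + s) 0 := getD_le_getD hM hlt (by omega)
      · push_neg at hlt
        have hsd : s < d := by omega
        rcases Nat.lt_or_ge s k with hsk' | hsk'
        · have h1 := H s hsd
          rw [hMlen, getD_erase_lt haL hsk',
            getD_erase_lt haM (show M.length - 1 - d + s < l from by omega)] at h1
          rwa [show M.length - 1 - d + s = M.length - (d + 1) + s from by omega] at h1
        · exfalso
          have h1 := H s hsd
          rw [hMlen, getD_erase_ge haL (by omega) (by omega),
            getD_erase_lt haM (show M.length - 1 - d + s < l from by omega)] at h1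
          have h2 : M.getD (M.length - 1 - d + s) 0 < a := by
            rw [← hMl]; exact getD_lt_getD hM (by omega) hlq
          have h3 : a < L.getD (s + 1) 0 := by
            rw [← hLk]; exact getD_lt_getD hL (by omega) (by omega)
          omega

/-- The condition `PrecLE (S(I,d)) (E(J,d))` in terms of sorted lists. -/
lemma precLE_iff_lcond (I J : Finset ℕ) (d : ℕ) (hdI : d ≤ I.card) (hdJ : d ≤ J.card) :
    PrecLE (smallSet I d) (largeSet J d) ↔
      LCond (Finset.sort I (· ≤ ·)) (Finset.sort J (· ≤ ·)) d := by
  have lenI : (Finset.sort I (· ≤ ·)).length = I.card := Finset.length_sort _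
  have lenJ : (Finset.sort J (· ≤ ·)).length = J.card := Finset.length_sort _
  have e1 : Finset.sort (smallSet I d) (· ≤ ·) = (Finset.sort I (· ≤ ·)).take d :=
    (List.toFinset_sort _ ((Finset.sort_nodup (s := I) _).sublist (List.take_sublist _ _))).mpr
      (List.Pairwise.sublist (List.take_sublist _ _) (Finset.pairwise_sort (s := I) _))
  have e2 : Finset.sort (largeSet J d) (· ≤ ·) =
      (Finset.sort J (· ≤ ·)).drop (J.card - d) :=
    (List.toFinset_sort _ ((Finset.sort_nodup (s := J) _).sublist (List.drop_sublist _ _))).mpr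
      (List.Pairwise.sublist (List.drop_sublist _ _) (Finset.pairwise_sort (s := J) _))
  have c1 : (smallSet I d).card = d := by
    rw [smallSet, List.toFinset_card_of_nodup
      ((Finset.sort_nodup (s := I) _).sublist (List.take_sublist _ _)), List.length_take, lenI]
    omega
  have c2 : (largeSet J d).card = d := by
    rw [largeSet, List.toFinset_card_of_nodup
      ((Finset.sort_nodup (s := J) _).sublist (List.drop_sublist _ _)), List.length_drop, lenJ]
    omega
  have gtake : ∀ s < d, ((Finset.sort I (· ≤ ·)).take d).getD s 0
      = (Finset.sort I (· ≤ ·)).getD s 0 := by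
    intro s hs
    rw [List.getD_eq_getElem _ _ (by rw [List.length_take, lenI]; omega),
      List.getElem_take, List.getD_eq_getElem _ _ (by omega)]
  have gdrop : ∀ s < d, ((Finset.sort J (· ≤ ·)).drop (J.card - d)).getD s 0
      = (Finset.sort J (· ≤ ·)).getD (J.card - d + s) 0 := by
    intro s hs
    rw [List.getD_eq_getElem _ _ (by rw [List.length_drop, lenJ]; omega),
      List.getElem_drop, List.getD_eq_getElem _ _ (by rw [lenJ]; omega)]
  constructor
  · rintro ⟨-, h⟩ s hs
    have h1 := h s (by omega)
    rw [e1, e2, gtake s hs, gdrop s hs] at h1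
    rwa [lenJ]
  · intro h
    refine ⟨by rw [c1, c2], ?_⟩
    intro s hs
    rw [c1] at hs
    rw [e1, e2, gtake s hs, gdrop s hs]
    have h1 := h s hs
    rwa [lenJ] at h1

lemma precLE_zero (I J : Finset ℕ) : PrecLE (smallSet I 0) (largeSet J 0) :=
  (precLE_iff_lcond I J 0 (Nat.zero_le _) (Nat.zero_le _)).mpr (fun s hs => by omega)

/-- **Deleting a common element.**  For `I, J ⊆ [n]` and `a ∈ I ∩ J`,
`h(I, J) = h(I \ {a}, J \ {a}) + 1`. -/
theorem homDim_erase_common (n : ℕ) (hn : 1 ≤ n) (I J : Finset ℕ)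
    (hI : I ⊆ Finset.Icc 1 n) (hJ : J ⊆ Finset.Icc 1 n)
    (a : ℕ) (ha : a ∈ I ∩ J) :
    homDim I J = homDim (I.erase a) (J.erase a) + 1 := by
  classical
  rw [Finset.mem_inter] at ha
  obtain ⟨haI, haJ⟩ := ha
  have haLi : a ∈ Finset.sort I (· ≤ ·) := (Finset.mem_sort _).mpr haI
  have haLj : a ∈ Finset.sort J (· ≤ ·) := (Finset.mem_sort _).mpr haJ
  have sI : (Finset.sort I (· ≤ ·)).Pairwise (· < ·) := (Finset.sortedLT_sort I).pairwise
  have sJ : (Finset.sort J (· ≤ ·)).Pairwise (· < ·) := (Finset.sortedLT_sort J).pairwise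
  have lenI : (Finset.sort I (· ≤ ·)).length = I.card := Finset.length_sort _
  have lenJ : (Finset.sort J (· ≤ ·)).length = J.card := Finset.length_sort _
  have hIc : 1 ≤ I.card := Finset.card_pos.mpr ⟨a, haI⟩
  have hJc : 1 ≤ J.card := Finset.card_pos.mpr ⟨a, haJ⟩
  have cI : (I.erase a).card = I.card - 1 := Finset.card_erase_of_mem haI
  have cJ : (J.erase a).card = J.card - 1 := Finset.card_erase_of_mem haJ
  unfold homDim
  set S := {d | d ≤ min I.card J.card ∧ PrecLE (smallSet I d) (largeSet J d)} with hS
  set S' := {d | d ≤ min (I.erase a).card (J.erase a).card ∧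
    PrecLE (smallSet (I.erase a) d) (largeSet (J.erase a) d)} with hS'
  have key : ∀ d, d + 1 ∈ S ↔ d ∈ S' := by
    intro d
    constructor
    · rintro ⟨hle, hP⟩
      have h1 := (precLE_iff_lcond I J (d + 1) (by omega) (by omega)).mp hP
      have h2 := (lcond_erase sI sJ haLi haLj (by omega) (by omega)).mp h1
      refine ⟨by omega, ?_⟩
      rw [precLE_iff_lcond _ _ d (by omega) (by omega), sort_erase, sort_erase]
      exact h2
    · rintro ⟨hle, hP⟩
      have h1 := (precLE_iff_lcond _ _ d (by omega) (by omega)).mp hP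
      rw [sort_erase, sort_erase] at h1
      have h2 := (lcond_erase sI sJ haLi haLj (by omega) (by omega)).mpr h1
      exact ⟨by omega, (precLE_iff_lcond I J (d + 1) (by omega) (by omega)).mpr h2⟩
  have h0S : (0 : ℕ) ∈ S := ⟨by omega, precLE_zero I J⟩
  have h0S' : (0 : ℕ) ∈ S' := ⟨by omega, precLE_zero _ _⟩
  have h1S : (1 : ℕ) ∈ S := by
    refine ⟨by omega, (precLE_iff_lcond I J 1 hIc hJc).mpr ?_⟩
    intro s hs
    have hs0 : s = 0 := by omega
    subst hs0
    have hkI : (Finset.sort I (· ≤ ·)).idxOf a < (Finset.sort I (· ≤ ·)).length :=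
      List.idxOf_lt_length_iff.mpr haLi
    have hkJ : (Finset.sort J (· ≤ ·)).idxOf a < (Finset.sort J (· ≤ ·)).length :=
      List.idxOf_lt_length_iff.mpr haLj
    calc (Finset.sort I (· ≤ ·)).getD 0 0
        ≤ (Finset.sort I (· ≤ ·)).getD ((Finset.sort I (· ≤ ·)).idxOf a) 0 :=
          getD_le_getD sI (Nat.zero_le _) hkI
      _ = a := getD_indexOf' haLi
      _ = (Finset.sort J (· ≤ ·)).getD ((Finset.sort J (· ≤ ·)).idxOf a) 0 :=
          (getD_indexOf' haLj).symm
      _ ≤ (Finset.sort J (· ≤ ·)).getD ((Finset.sort J (· ≤ ·)).length - 1 + 0) 0 :=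
          getD_le_getD sJ (by omega) (by omega)
  have bddS : BddAbove S := ⟨min I.card J.card, fun x hx => hx.1⟩
  have bddS' : BddAbove S' := ⟨min (I.erase a).card (J.erase a).card, fun x hx => hx.1⟩
  have hNmem : sSup S' ∈ S' := Nat.sSup_mem ⟨0, h0S'⟩ bddS'
  apply le_antisymm
  · refine csSup_le ⟨0, h0S⟩ ?_
    intro x hx
    match x with
    | 0 => omega
    | (y + 1) =>
      have hy : y ∈ S' := (key y).mp hx
      exact Nat.succ_le_succ (le_csSup bddS' hy)
  · exact le_csSup bddS ((key _).mpr hNmem)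
end
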